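/- arXiv:math/9904052 — 7 statements merged into one kernel-verified Lean document; each statement's English description precedes it below -/
import Mathlib

section
/- Let C be a locally trivial numerable X-groupoid with basepoint * ∈ X. Then the target map β : C_* → X, where C_* := α⁻¹(*) carries the right Ω_C-action u·c := uc, is a numerable principal Ω_C-bundle: for every C-contraction ρ the map ψ̂_ρ(u) := (β(u), ρ(β(u))·u) is an Ω_C-equivariant homeomorphism β⁻¹(U_ρ) → U_ρ × Ω_C over U_ρ, the sets U_ρ cover X and admit a subordinate partition of unity. Moreover, the formula w̃(c,u) := c·u defines a representation of C on this principal Ω_C-bundle (pointed by i_* ∈ C_*). -/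
open Set Topology Filter

/-- A topological groupoid over a space `X` ("X-groupoid"): source and target maps,
partially defined continuous composition, continuous units and continuous inversion. -/
structure TopGroupoidOver (X : Type*) (C : Type*) [TopologicalSpace X] [TopologicalSpace C] where
  src : C → X
  tgt : C → X
  comp : (c₁ : C) → (c₂ : C) → src c₁ = tgt c₂ → C
  unit : X → C
  ginv : C → C
  continuous_src : Continuous src
  continuous_tgt : Continuous tgt
  continuous_comp : Continuous fun q : {q : C × C // src q.1 = tgt q.2} => comp q.1.1 q.1.2 q.2
  continuous_unit : Continuous unit
  continuous_ginv : Continuous ginv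
  src_comp : ∀ c₁ c₂ h, src (comp c₁ c₂ h) = src c₂
  tgt_comp : ∀ c₁ c₂ h, tgt (comp c₁ c₂ h) = tgt c₁
  comp_assoc : ∀ c₁ c₂ c₃ (h₁ : src c₁ = tgt c₂) (h₂ : src c₂ = tgt c₃) h₃ h₄,
    comp (comp c₁ c₂ h₁) c₃ h₃ = comp c₁ (comp c₂ c₃ h₂) h₄
  src_unit : ∀ x, src (unit x) = x
  tgt_unit : ∀ x, tgt (unit x) = x
  comp_unit : ∀ c h, comp c (unit (src c)) h = c
  unit_comp : ∀ c h, comp (unit (tgt c)) c h = c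
  src_ginv : ∀ c, src (ginv c) = tgt c
  tgt_ginv : ∀ c, tgt (ginv c) = src c
  comp_ginv : ∀ c h, comp c (ginv c) h = unit (tgt c)
  ginv_comp : ∀ c h, comp (ginv c) c h = unit (src c)

/-- A principal `G`-space over `X`: a continuous map `proj : E → X` with a continuous free
right `G`-action whose orbits are exactly the fibres of `proj` (i.e. `E/G → X` is bijective). -/
structure PrincipalGSpace (X E G : Type*) [TopologicalSpace X] [TopologicalSpace E]
    [TopologicalSpace G] [Group G] where
  proj : E → X
  smul : E → G → E
  continuous_proj : Continuous proj
  continuous_smul : Continuous fun q : E × G => smul q.1 q.2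
  smul_one : ∀ z, smul z 1 = z
  smul_mul : ∀ z g₁ g₂, smul (smul z g₁) g₂ = smul z (g₁ * g₂)
  free : ∀ z g, smul z g = z → g = 1
  proj_smul : ∀ z g, proj (smul z g) = proj z
  proj_surjective : Function.Surjective proj
  exists_smul_eq : ∀ y z, proj y = proj z → ∃ g : G, smul z g = y

variable {X C E G : Type*} [TopologicalSpace X] [TopologicalSpace C] [TopologicalSpace E]
  [TopologicalSpace G] [Group G]

/-- `ξ` is trivializable over `U ⊆ X`: there is a `G`-equivariant homeomorphism
`proj⁻¹(U) ≃ U × G` over `U`. -/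
def PrincipalGSpace.TrivOn (ξ : PrincipalGSpace X E G) (U : Set X) : Prop :=
  ∃ φ : {z : E // ξ.proj z ∈ U} ≃ₜ ↥U × G,
    (∀ z, ((φ z).1 : X) = ξ.proj z.1) ∧
    (∀ z (g : G) (hz : ξ.proj (ξ.smul z.1 g) ∈ U),
      φ ⟨ξ.smul z.1 g, hz⟩ = ((φ z).1, (φ z).2 * g))

/-- `ξ` is a (locally trivial) principal `G`-bundle. -/
def PrincipalGSpace.IsBundle (ξ : PrincipalGSpace X E G) : Prop :=
  ∀ x : X, ∃ U : Set X, IsOpen U ∧ x ∈ U ∧ ξ.TrivOn U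

/-- `ξ` is numerable: some trivializing open cover admits a subordinate partition of unity. -/
def PrincipalGSpace.Numerable (ξ : PrincipalGSpace X E G) : Prop :=
  ∃ (ι : Type) (U : ι → Set X) (pou : PartitionOfUnity ι X univ),
    (∀ i, IsOpen (U i) ∧ ξ.TrivOn (U i)) ∧ (⋃ i, U i) = univ ∧ pou.IsSubordinate U

/-- A representation of the `X`-groupoid `gpd` on the principal `G`-space `ξ`. -/
structure GroupoidRep (gpd : TopGroupoidOver X C) (ξ : PrincipalGSpace X E G) where
  w : (c : C) → (z : E) → gpd.src c = ξ.proj z → E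
  continuous_w : Continuous fun q : {q : C × E // gpd.src q.1 = ξ.proj q.2} => w q.1.1 q.1.2 q.2
  proj_w : ∀ c z h, ξ.proj (w c z h) = gpd.tgt c
  w_comp : ∀ c d z (hcd : gpd.src c = gpd.tgt d) (hdz : gpd.src d = ξ.proj z) h₁ h₂,
    w (gpd.comp c d hcd) z h₁ = w c (w d z hdz) h₂
  w_ginv : ∀ c z (h : gpd.src c = ξ.proj z) h', w (gpd.ginv c) (w c z h) h' = z
  w_smul : ∀ c z g (h : gpd.src c = ξ.proj z) h', w c (ξ.smul z g) h' = ξ.smul (w c z h) g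

/-- A `C`-contraction: a continuous map `ρ : U → C` on an open set `U ⊆ X`
with `α(ρ(x)) = x` and `β(ρ(x)) = x₀`. -/
structure GpdContraction (gpd : TopGroupoidOver X C) (x₀ : X) where
  U : Set X
  isOpen : IsOpen U
  map : U → C
  continuous_map : Continuous map
  src_map : ∀ x : U, gpd.src (map x) = x
  tgt_map : ∀ x : U, gpd.tgt (map x) = x₀

/-- The groupoid is locally trivial: the domains of the `C`-contractions cover `X`. -/
def TopGroupoidOver.LocTrivial (gpd : TopGroupoidOver X C) (x₀ : X) : Prop :=
  ∀ x : X, ∃ κ : GpdContraction gpd x₀, x ∈ κ.U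

/-- A locally trivial numerable groupoid: the cover by domains of the `C`-contractions
admits a subordinate partition of unity. -/
def TopGroupoidOver.LocTrivNumerable (gpd : TopGroupoidOver X C) (x₀ : X) : Prop :=
  gpd.LocTrivial x₀ ∧
  ∃ pou : PartitionOfUnity (GpdContraction gpd x₀) X univ,
    pou.IsSubordinate fun κ => κ.U

/-- The group `Ω_C = C_*^*` of loops of the groupoid at the basepoint `x₀`. -/
def OmegaGp (gpd : TopGroupoidOver X C) (x₀ : X) :=
  {c : C // gpd.src c = x₀ ∧ gpd.tgt c = x₀}

instance (gpd : TopGroupoidOver X C) (x₀ : X) : TopologicalSpace (OmegaGp gpd x₀) :=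
  instTopologicalSpaceSubtype

instance (gpd : TopGroupoidOver X C) (x₀ : X) : Group (OmegaGp gpd x₀) where
  mul a b := ⟨gpd.comp a.1 b.1 (a.2.1.trans b.2.2.symm),
    (gpd.src_comp _ _ _).trans b.2.1, (gpd.tgt_comp _ _ _).trans a.2.2⟩
  one := ⟨gpd.unit x₀, gpd.src_unit x₀, gpd.tgt_unit x₀⟩
  inv a := ⟨gpd.ginv a.1, (gpd.src_ginv _).trans a.2.2, (gpd.tgt_ginv _).trans a.2.1⟩
  mul_assoc a b c := Subtype.ext (gpd.comp_assoc a.1 b.1 c.1 _ _ _ _)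
  one_mul := by
    rintro ⟨c, hs, ht⟩
    apply Subtype.ext
    show gpd.comp (gpd.unit x₀) c _ = c
    subst ht
    exact gpd.unit_comp c _
  mul_one := by
    rintro ⟨c, hs, ht⟩
    apply Subtype.ext
    show gpd.comp c (gpd.unit x₀) _ = c
    subst hs
    exact gpd.comp_unit c _
  inv_mul_cancel := by
    rintro ⟨c, hs, ht⟩
    apply Subtype.ext
    show gpd.comp (gpd.ginv c) c _ = gpd.unit x₀
    subst hs
    exact gpd.ginv_comp c _

/-- A gauge transformation of `ξ`: a `G`-equivariant self-homeomorphism of `E` over `id_X`. -/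
def IsGaugeHomeo (ξ : PrincipalGSpace X E G) (χ : E ≃ₜ E) : Prop :=
  (∀ z, ξ.proj (χ z) = ξ.proj z) ∧ ∀ z g, χ (ξ.smul z g) = ξ.smul (χ z) g

/-- The gauge group of `ξ`. -/
def GaugeGp (ξ : PrincipalGSpace X E G) := {χ : E ≃ₜ E // IsGaugeHomeo ξ χ}

def GaugeGp.id (ξ : PrincipalGSpace X E G) : GaugeGp ξ :=
  ⟨Homeomorph.refl E, fun _ => rfl, fun _ _ => rfl⟩

/-- Composition of gauge transformations: `(GaugeGp.mul χ ψ) z = χ (ψ z)`. -/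
def GaugeGp.mul {ξ : PrincipalGSpace X E G} (χ ψ : GaugeGp ξ) : GaugeGp ξ :=
  ⟨ψ.1.trans χ.1, fun z => (χ.2.1 (ψ.1 z)).trans (ψ.2.1 z), fun z g => by
    simp only [Homeomorph.trans_apply, ψ.2.2 z g, χ.2.2 (ψ.1 z) g]⟩

/-- Inversion of gauge transformations. -/
def GaugeGp.inv {ξ : PrincipalGSpace X E G} (χ : GaugeGp ξ) : GaugeGp ξ :=
  ⟨χ.1.symm, fun z => by
      conv_rhs => rw [← χ.1.apply_symm_apply z]
      exact (χ.2.1 (χ.1.symm z)).symm,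
    fun z g => χ.1.injective (by rw [χ.1.apply_symm_apply, χ.2.2, χ.1.apply_symm_apply])⟩

/-- A symmetric open neighbourhood of the identity of `G`. -/
def SymmNhd {G : Type*} [TopologicalSpace G] [Group G] (V : Set G) : Prop :=
  IsOpen V ∧ (1 : G) ∈ V ∧ ∀ v ∈ V, v⁻¹ ∈ V

/-- A topological group is SIN if the identity admits a fundamental system of
conjugation-invariant neighbourhoods. -/
def IsSIN (G : Type*) [TopologicalSpace G] [Group G] : Prop :=
  ∀ U ∈ 𝓝 (1 : G), ∃ V ∈ 𝓝 (1 : G), V ⊆ U ∧ ∀ g ∈ V, ∀ h : G, h * g * h⁻¹ ∈ V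

/-- The basic entourage `O^𝒢(K,V)` on the gauge group: pairs `(χ, χ̃)` such that
`γ(χ(z), χ̃(z)) ∈ V` for all `z` over `K`, i.e. `χ(z) = χ̃(z)·v` for some `v ∈ V`. -/
def gaugeEnt (ξ : PrincipalGSpace X E G) (K : Set X) (V : Set G) :
    Set (GaugeGp ξ × GaugeGp ξ) :=
  {p | ∀ z : E, ξ.proj z ∈ K → ∃ v ∈ V, p.1.1 z = ξ.smul (p.2.1 z) v}

/-- The basic entourage `O^R(L,V)` on the set of representations. -/
def repEnt (gpd : TopGroupoidOver X C) (ξ : PrincipalGSpace X E G) (L : Set C) (V : Set G) :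
    Set (GroupoidRep gpd ξ × GroupoidRep gpd ξ) :=
  {p | ∀ c ∈ L, ∀ z (h : gpd.src c = ξ.proj z), ∃ v ∈ V, p.1.w c z h = ξ.smul (p.2.w c z h) v}

/-- The basic entourage `{(g̃,g) : g̃ g⁻¹ ∈ V}` of the canonical uniformity of `G`. -/
def grpEnt (G : Type*) [TopologicalSpace G] [Group G] (V : Set G) : Set (G × G) :=
  {p | p.1 * p.2⁻¹ ∈ V}

/-- The compact-open topology on the gauge group (as subspace of `C(E,E)`). -/
def gaugeCO (ξ : PrincipalGSpace X E G) : TopologicalSpace (GaugeGp ξ) :=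
  TopologicalSpace.induced (fun χ : GaugeGp ξ => (⟨χ.1, χ.1.continuous⟩ : C(E, E)))
    inferInstance

/-- The compact-open topology on the set of representations
(as subspace of `C(C ×_X E, E)`). -/
def repCO (gpd : TopGroupoidOver X C) (ξ : PrincipalGSpace X E G) :
    TopologicalSpace (GroupoidRep gpd ξ) :=
  TopologicalSpace.induced
    (fun w : GroupoidRep gpd ξ =>
      (⟨fun q => w.w q.1.1 q.1.2 q.2, w.continuous_w⟩ :
        C({q : C × E // gpd.src q.1 = ξ.proj q.2}, E))) inferInstance

/-- A space is semilocally contractible if every point has a neighbourhood whose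
inclusion is homotopic to a constant map. -/
def SemiLocallyContractible (Z : Type*) [TopologicalSpace Z] : Prop :=
  ∀ z : Z, ∃ U ∈ 𝓝 z, ∃ z' : Z,
    (⟨Subtype.val, continuous_subtype_val⟩ : C(U, Z)).Homotopic (ContinuousMap.const U z')

/-- A continuous invariant map `q : P → Q` with a continuous right `H`-action on `P`
is a principal `H`-bundle: each point of `Q` has an open neighbourhood `T` with an
`H`-equivariant homeomorphism `q⁻¹(T) ≃ T × H` over `T`. -/
def IsPrincipalHBundle {P Q H : Type*} [TopologicalSpace P] [TopologicalSpace Q]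
    [TopologicalSpace H] (q : P → Q) (act : P → H → P) (hmul : H → H → H) : Prop :=
  Continuous q ∧ Continuous (fun s : P × H => act s.1 s.2) ∧
  (∀ p h, q (act p h) = q p) ∧
  ∀ y : Q, ∃ T : Set Q, IsOpen T ∧ y ∈ T ∧
    ∃ φ : {p : P // q p ∈ T} ≃ₜ ↥T × H,
      (∀ p, ((φ p).1 : Q) = q p.1) ∧
      ∀ p (h : H) (hm : q (act p.1 h) ∈ T), φ ⟨act p.1 h, hm⟩ = ((φ p).1, hmul (φ p).2 h)

theorem TopGroupoidOver.comp_congr (gpd : TopGroupoidOver X C) {a a' b b' : C}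
    (ha : a = a') (hb : b = b') (h : gpd.src a = gpd.tgt b) (h' : gpd.src a' = gpd.tgt b') :
    gpd.comp a b h = gpd.comp a' b' h' := by subst ha; subst hb; rfl

theorem TopGroupoidOver.ginv_comp_comp (gpd : TopGroupoidOver X C) (ρ u : C)
    (h1 : gpd.src ρ = gpd.tgt u) (h2 : gpd.src (gpd.ginv ρ) = gpd.tgt (gpd.comp ρ u h1)) :
    gpd.comp (gpd.ginv ρ) (gpd.comp ρ u h1) h2 = u := by
  have h3 : gpd.src (gpd.ginv ρ) = gpd.tgt ρ := gpd.src_ginv ρ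
  have h4 : gpd.src (gpd.comp (gpd.ginv ρ) ρ h3) = gpd.tgt u := by rw [gpd.src_comp]; exact h1
  have h6 : gpd.src (gpd.unit (gpd.tgt u)) = gpd.tgt u := gpd.src_unit _
  calc gpd.comp (gpd.ginv ρ) (gpd.comp ρ u h1) h2
      = gpd.comp (gpd.comp (gpd.ginv ρ) ρ h3) u h4 :=
        (gpd.comp_assoc _ _ _ h3 h1 h4 h2).symm
    _ = gpd.comp (gpd.unit (gpd.tgt u)) u h6 :=
        gpd.comp_congr (by rw [gpd.ginv_comp ρ h3, h1]) rfl h4 h6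
    _ = u := gpd.unit_comp u h6

theorem TopGroupoidOver.comp_ginv_comp (gpd : TopGroupoidOver X C) (ρ c : C)
    (hc : gpd.tgt c = gpd.tgt ρ) (h1 : gpd.src (gpd.ginv ρ) = gpd.tgt c)
    (h2 : gpd.src ρ = gpd.tgt (gpd.comp (gpd.ginv ρ) c h1)) :
    gpd.comp ρ (gpd.comp (gpd.ginv ρ) c h1) h2 = c := by
  have h3 : gpd.src ρ = gpd.tgt (gpd.ginv ρ) := (gpd.tgt_ginv ρ).symm
  have h4 : gpd.src (gpd.comp ρ (gpd.ginv ρ) h3) = gpd.tgt c := by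
    rw [gpd.src_comp, gpd.src_ginv, hc]
  have h6 : gpd.src (gpd.unit (gpd.tgt c)) = gpd.tgt c := gpd.src_unit _
  calc gpd.comp ρ (gpd.comp (gpd.ginv ρ) c h1) h2
      = gpd.comp (gpd.comp ρ (gpd.ginv ρ) h3) c h4 :=
        (gpd.comp_assoc _ _ _ h3 h1 h4 h2).symm
    _ = gpd.comp (gpd.unit (gpd.tgt c)) c h6 :=
        gpd.comp_congr (by rw [gpd.comp_ginv ρ h3, hc]) rfl h4 h6
    _ = c := gpd.unit_comp c h6

theorem TopGroupoidOver.continuous_comp' (gpd : TopGroupoidOver X C) {Z : Type*}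
    [TopologicalSpace Z] {f g : Z → C} (hf : Continuous f) (hg : Continuous g)
    (h : ∀ z, gpd.src (f z) = gpd.tgt (g z)) :
    Continuous fun z => gpd.comp (f z) (g z) (h z) :=
  gpd.continuous_comp.comp (Continuous.subtype_mk (hf.prodMk hg) h)
namespace HausmannAux

variable {X C : Type*} [TopologicalSpace X] [TopologicalSpace C]

/-- The total space `C_* = α⁻¹(x₀)` of the loop bundle. -/
abbrev ESp (gpd : TopGroupoidOver X C) (x₀ : X) := {u : C // gpd.src u = x₀}

/-- The principal `Ω_C`-space `β : C_* → X`. -/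
noncomputable def loopBundle (gpd : TopGroupoidOver X C) (x₀ : X)
    (hLT : gpd.LocTrivial x₀) :
    PrincipalGSpace X (ESp gpd x₀) (OmegaGp gpd x₀) where
  proj u := gpd.tgt u.1
  smul u c := ⟨gpd.comp u.1 c.1 (u.2.trans c.2.2.symm), by
    rw [gpd.src_comp]; exact c.2.1⟩
  continuous_proj := gpd.continuous_tgt.comp continuous_subtype_val
  continuous_smul := by
    apply Continuous.subtype_mk
    exact gpd.continuous_comp' (f := fun q : ESp gpd x₀ × OmegaGp gpd x₀ => q.1.1)
      (g := fun q => q.2.1)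
      (continuous_subtype_val.comp continuous_fst)
      (continuous_subtype_val.comp continuous_snd)
      (fun q => q.1.2.trans q.2.2.2.symm)
  smul_one z := by
    apply Subtype.ext
    show gpd.comp z.1 (gpd.unit x₀) (z.2.trans (gpd.tgt_unit x₀).symm) = z.1
    calc gpd.comp z.1 (gpd.unit x₀) (z.2.trans (gpd.tgt_unit x₀).symm)
        = gpd.comp z.1 (gpd.unit (gpd.src z.1)) (by rw [z.2, gpd.tgt_unit]) :=
          gpd.comp_congr rfl (by rw [z.2]) _ _
      _ = z.1 := gpd.comp_unit z.1 _
  smul_mul z g₁ g₂ := Subtype.ext (gpd.comp_assoc _ _ _ _ _ _ _)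
  free z g hzg := by
    have h1 : gpd.comp z.1 g.1 (z.2.trans g.2.2.symm) = z.1 := congrArg Subtype.val hzg
    apply Subtype.ext
    show g.1 = gpd.unit x₀
    have h3 : gpd.src (gpd.ginv z.1) = gpd.tgt (gpd.comp z.1 g.1 (z.2.trans g.2.2.symm)) := by
      rw [gpd.src_ginv, gpd.tgt_comp]
    have key := gpd.ginv_comp_comp z.1 g.1 (z.2.trans g.2.2.symm) h3
    rw [gpd.comp_congr rfl h1 h3 (by rw [gpd.src_ginv])] at key
    rw [← key, gpd.ginv_comp z.1 _, z.2]
  proj_smul z g := gpd.tgt_comp _ _ _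
  proj_surjective x := by
    obtain ⟨κ, hx⟩ := hLT x
    refine ⟨⟨gpd.ginv (κ.map ⟨x, hx⟩), ?_⟩, ?_⟩
    · rw [gpd.src_ginv, κ.tgt_map]
    · show gpd.tgt (gpd.ginv (κ.map ⟨x, hx⟩)) = x
      rw [gpd.tgt_ginv, κ.src_map]
  exists_smul_eq y z hyz := by
    have hyz' : gpd.tgt y.1 = gpd.tgt z.1 := hyz
    have h1 : gpd.src (gpd.ginv z.1) = gpd.tgt y.1 := by rw [gpd.src_ginv, hyz']
    refine ⟨⟨gpd.comp (gpd.ginv z.1) y.1 h1, ?_, ?_⟩, ?_⟩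
    · rw [gpd.src_comp]; exact y.2
    · rw [gpd.tgt_comp, gpd.tgt_ginv, z.2]
    · apply Subtype.ext
      exact gpd.comp_ginv_comp z.1 y.1 hyz' h1 _

theorem loopBundle_proj (gpd : TopGroupoidOver X C) (x₀ : X) (hLT : gpd.LocTrivial x₀)
    (u : ESp gpd x₀) : (loopBundle gpd x₀ hLT).proj u = gpd.tgt u.1 := rfl

/-- The trivializing homeomorphism over the domain of a contraction. -/
theorem trivHomeo (gpd : TopGroupoidOver X C) (x₀ : X) (κ : GpdContraction gpd x₀) :
    ∃ φ : {u : ESp gpd x₀ // gpd.tgt u.1 ∈ κ.U} ≃ₜ ↥κ.U × OmegaGp gpd x₀,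
      (∀ u, ((φ u).1 : X) = gpd.tgt u.1.1) ∧
      (∀ u (h : gpd.src (κ.map ⟨gpd.tgt u.1.1, u.2⟩) = gpd.tgt u.1.1),
        ((φ u).2).1 = gpd.comp (κ.map ⟨gpd.tgt u.1.1, u.2⟩) u.1.1 h) ∧
      (∀ u (c : OmegaGp gpd x₀) (h : gpd.src u.1.1 = gpd.tgt c.1)
        (hs : gpd.src (gpd.comp u.1.1 c.1 h) = x₀)
        (hm : gpd.tgt (gpd.comp u.1.1 c.1 h) ∈ κ.U),
        φ ⟨⟨gpd.comp u.1.1 c.1 h, hs⟩, hm⟩ = ((φ u).1, (φ u).2 * c)) := by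
  classical
  -- source of ρ(β u) is β u
  have hsm : ∀ u : {u : ESp gpd x₀ // gpd.tgt u.1 ∈ κ.U},
      gpd.src (κ.map ⟨gpd.tgt u.1.1, u.2⟩) = gpd.tgt u.1.1 := fun u => κ.src_map _
  refine ⟨{
    toFun := fun u => (⟨gpd.tgt u.1.1, u.2⟩,
      ⟨gpd.comp (κ.map ⟨gpd.tgt u.1.1, u.2⟩) u.1.1 (hsm u),
        by rw [gpd.src_comp]; exact u.1.2,
        by rw [gpd.tgt_comp]; exact κ.tgt_map _⟩)
    invFun := fun p =>
      ⟨⟨gpd.comp (gpd.ginv (κ.map p.1)) p.2.1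
          (by rw [gpd.src_ginv, κ.tgt_map, p.2.2.2]),
        by rw [gpd.src_comp]; exact p.2.2.1⟩,
        by rw [gpd.tgt_comp, gpd.tgt_ginv, κ.src_map]; exact p.1.2⟩
    left_inv := by
      intro u
      apply Subtype.ext; apply Subtype.ext
      show gpd.comp (gpd.ginv (κ.map _)) (gpd.comp (κ.map _) u.1.1 _) _ = u.1.1
      exact gpd.ginv_comp_comp _ _ _ _
    right_inv := by
      rintro ⟨x, c⟩
      have h1 : gpd.src (gpd.ginv (κ.map x)) = gpd.tgt c.1 := by
        rw [gpd.src_ginv, κ.tgt_map, c.2.2]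
      have hβ : gpd.tgt (gpd.comp (gpd.ginv (κ.map x)) c.1 h1) = (x : X) := by
        rw [gpd.tgt_comp, gpd.tgt_ginv, κ.src_map]
      have hmem : gpd.tgt (gpd.comp (gpd.ginv (κ.map x)) c.1 h1) ∈ κ.U := hβ ▸ x.2
      refine Prod.ext (Subtype.ext hβ) (Subtype.ext ?_)
      show gpd.comp (κ.map ⟨gpd.tgt (gpd.comp (gpd.ginv (κ.map x)) c.1 h1), hmem⟩)
          (gpd.comp (gpd.ginv (κ.map x)) c.1 h1) (κ.src_map _) = c.1
      have hmap : κ.map ⟨gpd.tgt (gpd.comp (gpd.ginv (κ.map x)) c.1 h1), hmem⟩ = κ.map x :=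
        congrArg κ.map (Subtype.ext hβ)
      have H : gpd.src (κ.map x) = gpd.tgt (gpd.comp (gpd.ginv (κ.map x)) c.1 h1) := by
        rw [κ.src_map, hβ]
      rw [gpd.comp_congr hmap rfl (κ.src_map _) H]
      exact gpd.comp_ginv_comp (κ.map x) c.1 (by rw [c.2.2, κ.tgt_map]) h1 H
    continuous_toFun := by
      apply Continuous.prodMk
      · exact Continuous.subtype_mk
          (gpd.continuous_tgt.comp (continuous_subtype_val.comp continuous_subtype_val)) _
      · apply Continuous.subtype_mk
        exact gpd.continuous_comp'
          (κ.continuous_map.comp (Continuous.subtype_mk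
            (gpd.continuous_tgt.comp (continuous_subtype_val.comp continuous_subtype_val)) _))
          (continuous_subtype_val.comp continuous_subtype_val) hsm
    continuous_invFun := by
      apply Continuous.subtype_mk
      apply Continuous.subtype_mk
      exact gpd.continuous_comp'
        (gpd.continuous_ginv.comp (κ.continuous_map.comp continuous_fst))
        (continuous_subtype_val.comp continuous_snd) _ }, ?_, ?_, ?_⟩
  · intro u; rfl
  · intro u h; rfl
  · intro u c h hs hm
    have hβ : gpd.tgt (gpd.comp u.1.1 c.1 h) = gpd.tgt u.1.1 := gpd.tgt_comp _ _ _
    refine Prod.ext (Subtype.ext hβ) (Subtype.ext ?_)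
    have H1' : gpd.src (κ.map ⟨gpd.tgt u.1.1, u.2⟩) = gpd.tgt (gpd.comp u.1.1 c.1 h) := by
      rw [gpd.tgt_comp]; exact hsm u
    have h₃ : gpd.src (gpd.comp (κ.map ⟨gpd.tgt u.1.1, u.2⟩) u.1.1 (hsm u)) = gpd.tgt c.1 := by
      rw [gpd.src_comp]; exact h
    show gpd.comp (κ.map ⟨gpd.tgt (gpd.comp u.1.1 c.1 h), hm⟩) (gpd.comp u.1.1 c.1 h)
        (κ.src_map _)
        = gpd.comp (gpd.comp (κ.map ⟨gpd.tgt u.1.1, u.2⟩) u.1.1 (hsm u)) c.1 h₃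
    calc gpd.comp (κ.map ⟨gpd.tgt (gpd.comp u.1.1 c.1 h), hm⟩) (gpd.comp u.1.1 c.1 h)
          (κ.src_map _)
        = gpd.comp (κ.map ⟨gpd.tgt u.1.1, u.2⟩) (gpd.comp u.1.1 c.1 h) H1' :=
          gpd.comp_congr (congrArg κ.map (Subtype.ext hβ)) rfl _ _
      _ = gpd.comp (gpd.comp (κ.map ⟨gpd.tgt u.1.1, u.2⟩) u.1.1 (hsm u)) c.1 h₃ :=
          (gpd.comp_assoc _ _ _ (hsm u) h h₃ H1').symm
theorem GpdContraction.map_congr {gpd : TopGroupoidOver X C} {x₀ : X}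
    {κ κ' : GpdContraction gpd x₀} (h : κ = κ') (y : X) (p : y ∈ κ.U) (p' : y ∈ κ'.U) :
    κ.map ⟨y, p⟩ = κ'.map ⟨y, p'⟩ := by subst h; rfl

/-- Gluing contractions over a disjoint family of open sets. -/
theorem glueContraction (gpd : TopGroupoidOver X C) (x₀ : X) {A : Type*} (W : A → Set X)
    (hopen : ∀ a, IsOpen (W a)) (hdisj : ∀ a b, a ≠ b → Disjoint (W a) (W b))
    (j : A → GpdContraction gpd x₀) (hsub : ∀ a, W a ⊆ (j a).U) :
    ∃ κ : GpdContraction gpd x₀, κ.U = ⋃ a, W a := by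
  classical
  have choose_spec : ∀ x : ↥(⋃ a, W a), ∃ a, (x : X) ∈ W a := fun x => mem_iUnion.mp x.2
  let sel : ↥(⋃ a, W a) → A := fun x => (choose_spec x).choose
  have hsel : ∀ x : ↥(⋃ a, W a), (x : X) ∈ W (sel x) := fun x => (choose_spec x).choose_spec
  have hsel_eq : ∀ (x y : ↥(⋃ a, W a)), (y : X) ∈ W (sel x) → sel y = sel x := by
    intro x y hy
    by_contra hne
    exact Set.disjoint_left.mp (hdisj _ _ hne) (hsel y) hy
  refine ⟨⟨⋃ a, W a, isOpen_iUnion hopen,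
    fun x => (j (sel x)).map ⟨x, hsub _ (hsel x)⟩, ?_, ?_, ?_⟩, rfl⟩
  · -- continuity
    rw [continuous_iff_continuousAt]
    intro x
    have hWopen : IsOpen {y : ↥(⋃ a, W a) | (y : X) ∈ W (sel x)} :=
      (hopen _).preimage continuous_subtype_val
    apply ContinuousOn.continuousAt ?_ (hWopen.mem_nhds (hsel x))
    rw [continuousOn_iff_continuous_restrict]
    have hcont : Continuous fun y : {y : ↥(⋃ a, W a) // (y : X) ∈ W (sel x)} =>
        (j (sel x)).map ⟨y.1, hsub _ y.2⟩ :=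
      (j (sel x)).continuous_map.comp (Continuous.subtype_mk
        (continuous_subtype_val.comp continuous_subtype_val) _)
    apply hcont.congr
    intro y
    exact (GpdContraction.map_congr (congrArg j (hsel_eq x y.1 y.2)) _ _ _).symm
  · intro x; exact (j (sel x)).src_map _
  · intro x; exact (j (sel x)).tgt_map _
/-!### Dold's countable reduction of a numerable cover -/

section Dold

variable {ι' : Type*} (pou : PartitionOfUnity ι' X univ)

/-- The open set `W_S` of points where every `φ_κ`, `κ ∈ S`, dominates `1 - ∑_{j∈S} φ_j`. -/
def Wset (S : Finset ι') : Set X :=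
  {x | S.Nonempty ∧ ∀ κ ∈ S, 1 - ∑ j ∈ S, pou j x < pou κ x}

/-- A bump function with support exactly `W_S`. -/
noncomputable def mfun (S : Finset ι') (x : X) : ℝ :=
  if S.Nonempty then ∏ κ ∈ S, max 0 (pou κ x - (1 - ∑ j ∈ S, pou j x)) else 0

noncomputable def tfun (n : ℕ) (x : X) : ℝ :=
  ∑ᶠ S : {S : Finset ι' // S.card = n}, mfun pou S.1 x

def Vset (n : ℕ) : Set X := ⋃ S : {S : Finset ι' // S.card = n}, Wset pou S.1

noncomputable def sigfun (x : X) : ℝ := ∑ᶠ n : ℕ, tfun pou n x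

noncomputable def psifun (n : ℕ) (x : X) : ℝ :=
  max 0 (tfun pou n x - sigfun pou x / 2 ^ (n + 2))

noncomputable def sigpsi (x : X) : ℝ := ∑ᶠ n : ℕ, psifun pou n x

theorem sum_finset_le_one (x : X) (S : Finset ι') : ∑ j ∈ S, pou j x ≤ 1 := by
  classical
  have h1 : ∑ᶠ i, pou i x = ∑ i ∈ pou.finsupport x, pou i x :=
    finsum_eq_sum_of_support_subset _ (pou.coe_finsupport x).superset
  have h2 : ∑ j ∈ S, pou j x ≤ ∑ j ∈ S ∪ pou.finsupport x, pou j x :=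
    Finset.sum_le_sum_of_subset_of_nonneg Finset.subset_union_left
      (fun i _ _ => pou.nonneg i x)
  have h3 : ∑ j ∈ S ∪ pou.finsupport x, pou j x = ∑ j ∈ pou.finsupport x, pou j x := by
    refine (Finset.sum_subset Finset.subset_union_right ?_).symm
    intro i _ hi
    have := (pou.mem_finsupport x).not.mp hi
    simpa [Function.mem_support, not_not] using this
  calc ∑ j ∈ S, pou j x ≤ ∑ j ∈ pou.finsupport x, pou j x := h2.trans (le_of_eq h3)
    _ = ∑ᶠ i, pou i x := h1.symm
    _ ≤ 1 := pou.sum_le_one x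

theorem mfun_nonneg (S : Finset ι') (x : X) : 0 ≤ mfun pou S x := by
  unfold mfun; split
  · exact Finset.prod_nonneg fun κ _ => le_max_left _ _
  · exact le_rfl

theorem support_mfun (S : Finset ι') :
    Function.support (mfun pou S) = Wset pou S := by
  classical
  ext x
  by_cases hS : S.Nonempty
  · simp only [Function.mem_support, mfun, if_pos hS, Wset, mem_setOf_eq]
    constructor
    · intro hne
      refine ⟨hS, fun κ hκ => ?_⟩
      by_contra hle
      push_neg at hle
      exact hne (Finset.prod_eq_zero hκ (max_eq_left (by linarith)))
    · rintro ⟨-, hlt⟩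
      have : 0 < ∏ κ ∈ S, max 0 (pou κ x - (1 - ∑ j ∈ S, pou j x)) :=
        Finset.prod_pos fun κ hκ =>
          lt_max_iff.mpr (Or.inr (by have := hlt κ hκ; linarith))
      exact ne_of_gt this
  · simp [mfun, hS, Wset]

theorem isOpen_Wset (S : Finset ι') : IsOpen (Wset pou S) := by
  by_cases hS : S.Nonempty
  · have hW : Wset pou S = ⋂ κ ∈ S, {x | 1 - ∑ j ∈ S, pou j x < pou κ x} := by
      ext x; simp [Wset, hS]
    rw [hW]
    refine isOpen_biInter_finset fun κ _ => isOpen_lt ?_ (pou κ).continuous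
    exact continuous_const.sub (continuous_finset_sum _ fun j _ => (pou j).continuous)
  · have hW : Wset pou S = ∅ := by ext x; simp [Wset, hS]
    rw [hW]; exact isOpen_empty

theorem Wset_subset {U : ι' → Set X} (hsub : pou.IsSubordinate U) {S : Finset ι'}
    {κ : ι'} (hκ : κ ∈ S) : Wset pou S ⊆ U κ := by
  intro x hx
  have h0 : 0 ≤ 1 - ∑ j ∈ S, pou j x := by
    have := sum_finset_le_one pou x S; linarith
  have hpos : 0 < pou κ x := lt_of_le_of_lt h0 (hx.2 κ hκ)
  exact hsub κ (subset_tsupport _ (Function.mem_support.mpr (ne_of_gt hpos)))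

theorem Wset_disjoint {S T : Finset ι'} (hcard : S.card = T.card) (hne : S ≠ T) :
    Disjoint (Wset pou S) (Wset pou T) := by
  classical
  rw [Set.disjoint_left]
  intro x hxS hxT
  have hST : (S \ T).Nonempty := by
    rw [Finset.sdiff_nonempty]
    intro hsub'
    exact hne (Finset.eq_of_subset_of_card_le hsub' (le_of_eq hcard.symm))
  have hTS : (T \ S).Nonempty := by
    rw [Finset.sdiff_nonempty]
    intro hsub'
    exact hne (Finset.eq_of_subset_of_card_le hsub' (le_of_eq hcard)).symm
  obtain ⟨κ, hκ⟩ := hST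
  obtain ⟨l, hl⟩ := hTS
  rw [Finset.mem_sdiff] at hκ hl
  have F3S : pou l x ≤ 1 - ∑ j ∈ S, pou j x := by
    have := sum_finset_le_one pou x (insert l S)
    rw [Finset.sum_insert hl.2] at this; linarith
  have F3T : pou κ x ≤ 1 - ∑ j ∈ T, pou j x := by
    have := sum_finset_le_one pou x (insert κ T)
    rw [Finset.sum_insert hκ.2] at this; linarith
  have h1 := hxS.2 κ hκ.1
  have h2 := hxT.2 l hl.1
  linarith

theorem mem_Wset_finsupport (x : X) : x ∈ Wset pou (pou.finsupport x) := by
  have hsum : ∑ j ∈ pou.finsupport x, pou j x = 1 := pou.sum_finsupport (mem_univ x)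
  constructor
  · rw [Finset.nonempty_iff_ne_empty]
    intro he
    rw [he, Finset.sum_empty] at hsum
    norm_num at hsum
  · intro κ hκ
    rw [hsum, sub_self]
    have : pou κ x ≠ 0 := by
      have := (pou.mem_finsupport x).mp hκ
      simpa [Function.mem_support] using this
    exact lt_of_le_of_ne (pou.nonneg κ x) (Ne.symm this)

theorem subsets_finite_mfun {N : Set X}
    (hfin : {i : ι' | (Function.support (pou i) ∩ N).Nonempty}.Finite) :
    {S : Finset ι' | (Function.support (mfun pou S) ∩ N).Nonempty}.Finite := by
  classical
  have key : ∀ S : Finset ι', (Function.support (mfun pou S) ∩ N).Nonempty →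
      ↑S ⊆ {i : ι' | (Function.support (pou i) ∩ N).Nonempty} := by
    rintro S ⟨y, hy, hyN⟩ κ hκ
    rw [support_mfun] at hy
    have h0 : 0 ≤ 1 - ∑ j ∈ S, pou j y := by
      have := sum_finset_le_one pou y S; linarith
    have : 0 < pou κ y := lt_of_le_of_lt h0 (hy.2 κ hκ)
    exact ⟨y, Function.mem_support.mpr (ne_of_gt this), hyN⟩
  have hsubs : {S : Finset ι' | (Function.support (mfun pou S) ∩ N).Nonempty} ⊆
      (fun S : Finset ι' => (S : Set ι')) ⁻¹'
        {t : Set ι' | t ⊆ {i : ι' | (Function.support (pou i) ∩ N).Nonempty}} :=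
    fun S hS => key S hS
  exact ((hfin.finite_subsets).preimage Finset.coe_injective.injOn).subset hsubs

theorem locallyFinite_mfun : LocallyFinite fun S : Finset ι' => Function.support (mfun pou S) := by
  intro x
  obtain ⟨N, hN, hfin⟩ := pou.locallyFinite x
  exact ⟨N, hN, subsets_finite_mfun pou hfin⟩

theorem continuous_mfun (S : Finset ι') : Continuous (mfun pou S) := by
  unfold mfun
  split
  · exact continuous_finset_prod _ fun κ _ => continuous_const.max
      ((pou κ).continuous.sub
        (continuous_const.sub (continuous_finset_sum _ fun j _ => (pou j).continuous)))
  · exact continuous_const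

theorem continuous_tfun (n : ℕ) : Continuous (tfun pou n) :=
  continuous_finsum (fun S => continuous_mfun pou S.1)
    ((locallyFinite_mfun pou).comp_injective Subtype.val_injective)

theorem tfun_nonneg (n : ℕ) (x : X) : 0 ≤ tfun pou n x :=
  finsum_nonneg fun S => mfun_nonneg pou S.1 x

theorem support_tfun_subset (n : ℕ) : Function.support (tfun pou n) ⊆ Vset pou n := by
  intro x hx
  have : ∃ S : {S : Finset ι' // S.card = n}, mfun pou S.1 x ≠ 0 := by
    by_contra h
    push_neg at h
    exact hx (finsum_eq_zero_of_forall_eq_zero h)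
  obtain ⟨S, hS⟩ := this
  exact mem_iUnion.mpr ⟨S, (support_mfun pou S.1) ▸ Function.mem_support.mpr hS⟩

theorem finite_support_mfun_at (x : X) :
    (Function.support fun S : Finset ι' => mfun pou S x).Finite := by
  classical
  have key : ∀ S : Finset ι', mfun pou S x ≠ 0 → ↑S ⊆ (pou.finsupport x : Set ι') := by
    intro S hS κ hκ
    have hx : x ∈ Wset pou S := (support_mfun pou S) ▸ Function.mem_support.mpr hS
    have h0 : 0 ≤ 1 - ∑ j ∈ S, pou j x := by
      have := sum_finset_le_one pou x S; linarith
    have hpos : 0 < pou κ x := lt_of_le_of_lt h0 (hx.2 κ hκ)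
    rw [pou.coe_finsupport]
    exact Function.mem_support.mpr (ne_of_gt hpos)
  have : (Function.support fun S : Finset ι' => mfun pou S x) ⊆
      (fun S : Finset ι' => (S : Set ι')) ⁻¹' {t : Set ι' | t ⊆ (pou.finsupport x : Set ι')} :=
    fun S hS => key S hS
  exact (((pou.finsupport x : Set ι').toFinite.finite_subsets).preimage
    Finset.coe_injective.injOn).subset this

theorem finite_support_mfun_at' (n : ℕ) (x : X) :
    (Function.support fun S : {S : Finset ι' // S.card = n} => mfun pou S.1 x).Finite := by
  have : (Function.support fun S : {S : Finset ι' // S.card = n} => mfun pou S.1 x) ⊆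
      Subtype.val ⁻¹' (Function.support fun S : Finset ι' => mfun pou S x) := fun S hS => hS
  exact ((finite_support_mfun_at pou x).preimage Subtype.val_injective.injOn).subset this

theorem locallyFinite_tfun : LocallyFinite fun n : ℕ => Function.support (tfun pou n) := by
  intro x
  obtain ⟨N, hN, hfin⟩ := pou.locallyFinite x
  refine ⟨N, hN, ?_⟩
  classical
  have key : ∀ n : ℕ, (Function.support (tfun pou n) ∩ N).Nonempty →
      n ≤ hfin.toFinset.card := by
    rintro n ⟨y, hy, hyN⟩
    have : ∃ S : {S : Finset ι' // S.card = n}, mfun pou S.1 y ≠ 0 := by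
      by_contra h
      push_neg at h
      exact hy (finsum_eq_zero_of_forall_eq_zero h)
    obtain ⟨S, hS⟩ := this
    have hxW : y ∈ Wset pou S.1 := (support_mfun pou S.1) ▸ Function.mem_support.mpr hS
    have hsubF : S.1 ⊆ hfin.toFinset := by
      intro κ hκ
      rw [Set.Finite.mem_toFinset]
      have h0 : 0 ≤ 1 - ∑ j ∈ S.1, pou j y := by
        have := sum_finset_le_one pou y S.1; linarith
      have hpos : 0 < pou κ y := lt_of_le_of_lt h0 (hxW.2 κ hκ)
      exact ⟨y, Function.mem_support.mpr (ne_of_gt hpos), hyN⟩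
    calc n = S.1.card := S.2.symm
      _ ≤ hfin.toFinset.card := Finset.card_le_card hsubF
  exact (Set.finite_Iic hfin.toFinset.card).subset key
theorem continuous_sigfun : Continuous (sigfun pou) :=
  continuous_finsum (continuous_tfun pou) (locallyFinite_tfun pou)

theorem finite_support_tfun_at (x : X) :
    (Function.support fun n : ℕ => tfun pou n x).Finite :=
  (locallyFinite_tfun pou).point_finite x

theorem sigfun_pos (x : X) : 0 < sigfun pou x := by
  have hx := mem_Wset_finsupport pou x
  have hm : 0 < mfun pou (pou.finsupport x) x := by
    have := (support_mfun pou (pou.finsupport x)).symm ▸ hx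
    exact lt_of_le_of_ne (mfun_nonneg pou _ x) (Ne.symm this)
  have ht : mfun pou (pou.finsupport x) x ≤ tfun pou (pou.finsupport x).card x :=
    single_le_finsum (⟨pou.finsupport x, rfl⟩ :
        {S : Finset ι' // S.card = (pou.finsupport x).card})
      (finite_support_mfun_at' pou _ x) (fun S => mfun_nonneg pou S.1 x)
  have hs : tfun pou (pou.finsupport x).card x ≤ sigfun pou x :=
    single_le_finsum _ (finite_support_tfun_at pou x) (fun n => tfun_nonneg pou n x)
  linarith

theorem continuous_psifun (n : ℕ) : Continuous (psifun pou n) :=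
  continuous_const.max ((continuous_tfun pou n).sub ((continuous_sigfun pou).div_const _))

theorem psifun_nonneg (n : ℕ) (x : X) : 0 ≤ psifun pou n x := le_max_left _ _

theorem psifun_pos_iff (n : ℕ) (x : X) :
    psifun pou n x ≠ 0 ↔ sigfun pou x / 2 ^ (n + 2) < tfun pou n x := by
  constructor
  · intro h
    by_contra hle
    push_neg at hle
    exact h (by unfold psifun; exact max_eq_left (by linarith))
  · intro h
    have : 0 < tfun pou n x - sigfun pou x / 2 ^ (n + 2) := by linarith
    have h2 : psifun pou n x = tfun pou n x - sigfun pou x / 2 ^ (n + 2) :=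
      max_eq_right this.le
    rw [h2]; exact ne_of_gt this

theorem support_psifun_subset (n : ℕ) :
    Function.support (psifun pou n) ⊆ Function.support (tfun pou n) := by
  intro x hx
  have h1 := (psifun_pos_iff pou n x).mp hx
  have hs := sigfun_pos pou x
  have h2 : 0 < sigfun pou x / 2 ^ (n + 2) := by positivity
  exact Function.mem_support.mpr (ne_of_gt (lt_trans h2 h1))

theorem locallyFinite_psifun : LocallyFinite fun n : ℕ => Function.support (psifun pou n) :=
  (locallyFinite_tfun pou).subset (support_psifun_subset pou)

theorem exists_psifun_pos (x : X) : ∃ n : ℕ, psifun pou n x ≠ 0 := by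
  classical
  by_contra h
  push_neg at h
  have hle : ∀ n : ℕ, tfun pou n x ≤ sigfun pou x / 2 ^ (n + 2) := by
    intro n
    by_contra hlt
    push_neg at hlt
    exact ((psifun_pos_iff pou n x).mpr hlt) (h n)
  have hfin := finite_support_tfun_at pou x
  obtain ⟨N, hFN⟩ := hfin.toFinset.exists_nat_subset_range
  have hsig : sigfun pou x = ∑ n ∈ hfin.toFinset, tfun pou n x :=
    finsum_eq_sum_of_support_subset _ (by simp)
  have hb : ∑ n ∈ hfin.toFinset, tfun pou n x ≤
      ∑ n ∈ Finset.range N, sigfun pou x / 2 ^ (n + 2) := by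
    calc ∑ n ∈ hfin.toFinset, tfun pou n x
        ≤ ∑ n ∈ hfin.toFinset, sigfun pou x / 2 ^ (n + 2) :=
          Finset.sum_le_sum fun n _ => hle n
      _ ≤ ∑ n ∈ Finset.range N, sigfun pou x / 2 ^ (n + 2) := by
          refine Finset.sum_le_sum_of_subset_of_nonneg hFN fun i _ _ => ?_
          exact div_nonneg (sigfun_pos pou x).le (by positivity)
  have hgeom : ∑ n ∈ Finset.range N, sigfun pou x / 2 ^ (n + 2) ≤ sigfun pou x / 2 := by
    have h2 : ∀ n : ℕ, sigfun pou x / 2 ^ (n + 2) = sigfun pou x / 4 * (1 / 2) ^ n := by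
      intro n
      rw [pow_add, div_pow, one_pow]
      rw [div_mul_eq_div_div, eq_comm, div_mul_eq_mul_div, div_div]
      ring_nf
    calc ∑ n ∈ Finset.range N, sigfun pou x / 2 ^ (n + 2)
        = sigfun pou x / 4 * ∑ n ∈ Finset.range N, (1 / 2 : ℝ) ^ n := by
          rw [Finset.mul_sum]
          exact Finset.sum_congr rfl fun n _ => h2 n
      _ ≤ sigfun pou x / 4 * 2 := by
          refine mul_le_mul_of_nonneg_left (sum_geometric_two_le N) ?_
          have := sigfun_pos pou x; linarith
      _ = sigfun pou x / 2 := by ring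
  have hσ := sigfun_pos pou x
  have hhalf : sigfun pou x ≤ sigfun pou x / 2 := (le_of_eq hsig).trans (hb.trans hgeom)
  linarith

theorem finite_support_psifun_at (x : X) :
    (Function.support fun n : ℕ => psifun pou n x).Finite :=
  ((finite_support_tfun_at pou x).subset
    (fun n hn => Function.mem_support.mpr
      (Function.mem_support.mp ((support_psifun_subset pou n) hn))))

theorem continuous_sigpsi : Continuous (sigpsi pou) :=
  continuous_finsum (continuous_psifun pou) (locallyFinite_psifun pou)

theorem sigpsi_pos (x : X) : 0 < sigpsi pou x := by
  obtain ⟨n, hn⟩ := exists_psifun_pos pou x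
  have h1 : psifun pou n x ≤ sigpsi pou x :=
    single_le_finsum n (finite_support_psifun_at pou x) (fun m => psifun_nonneg pou m x)
  have h2 : 0 < psifun pou n x := lt_of_le_of_ne (psifun_nonneg pou n x) (Ne.symm hn)
  linarith

theorem finsum_psifun_div (x : X) :
    ∑ᶠ n : ℕ, psifun pou n x / sigpsi pou x = 1 := by
  classical
  have hfin := finite_support_psifun_at pou x
  have h1 : ∑ᶠ n : ℕ, psifun pou n x / sigpsi pou x
      = ∑ n ∈ hfin.toFinset, psifun pou n x / sigpsi pou x := by
    refine finsum_eq_sum_of_support_subset _ ?_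
    intro n hn
    have hn' : psifun pou n x / sigpsi pou x ≠ 0 := hn
    have hne : psifun pou n x ≠ 0 := fun h0 => hn' (by rw [h0, zero_div])
    simpa [Set.Finite.coe_toFinset] using hne
  have h2 : sigpsi pou x = ∑ n ∈ hfin.toFinset, psifun pou n x :=
    finsum_eq_sum_of_support_subset _ (by simp)
  rw [h1, ← Finset.sum_div, ← h2]
  exact div_self (ne_of_gt (sigpsi_pos pou x))

/-- The countable (ℕ-indexed) partition of unity subordinate to the `V n`. -/
noncomputable def doldPOU : PartitionOfUnity ℕ X univ where
  toFun n := ⟨fun x => psifun pou n x / sigpsi pou x,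
    (continuous_psifun pou n).div (continuous_sigpsi pou)
      (fun x => ne_of_gt (sigpsi_pos pou x))⟩
  locallyFinite' := by
    refine (locallyFinite_psifun pou).subset fun n x hx => ?_
    have hx' : psifun pou n x / sigpsi pou x ≠ 0 := hx
    exact fun h0 => hx' (by rw [h0, zero_div])
  nonneg' n x := div_nonneg (psifun_nonneg pou n x) (sigpsi_pos pou x).le
  sum_eq_one' x _ := finsum_psifun_div pou x
  sum_le_one' x := le_of_eq (finsum_psifun_div pou x)

theorem doldPOU_isSubordinate : (doldPOU pou).IsSubordinate (Vset pou) := by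
  intro n
  have hclosed : IsClosed {x : X | sigfun pou x / 2 ^ (n + 2) ≤ tfun pou n x} :=
    isClosed_le ((continuous_sigfun pou).div_const _) (continuous_tfun pou n)
  have hsupp : Function.support (doldPOU pou n) ⊆
      {x : X | sigfun pou x / 2 ^ (n + 2) ≤ tfun pou n x} := by
    intro x hx
    have hx' : psifun pou n x / sigpsi pou x ≠ 0 := hx
    have hψ : psifun pou n x ≠ 0 := fun h0 => hx' (by rw [h0, zero_div])
    exact ((psifun_pos_iff pou n x).mp hψ).le
  have h1 : tsupport (doldPOU pou n) ⊆
      {x : X | sigfun pou x / 2 ^ (n + 2) ≤ tfun pou n x} :=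
    closure_minimal hsupp hclosed
  refine h1.trans ?_
  intro x hx
  have hpos : 0 < sigfun pou x / 2 ^ (n + 2) := by
    have := sigfun_pos pou x; positivity
  exact support_tfun_subset pou n (Function.mem_support.mpr (ne_of_gt (lt_of_lt_of_le hpos hx)))

theorem iUnion_Vset : (⋃ n : ℕ, Vset pou n) = univ := by
  refine eq_univ_of_forall fun x => ?_
  exact mem_iUnion.mpr ⟨(pou.finsupport x).card,
    mem_iUnion.mpr ⟨⟨pou.finsupport x, rfl⟩, mem_Wset_finsupport pou x⟩⟩

theorem Vset_eq_iUnion_nonempty (n : ℕ) :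
    Vset pou n = ⋃ a : {S : Finset ι' // S.card = n ∧ S.Nonempty}, Wset pou a.1 := by
  apply Set.Subset.antisymm
  · intro x hx
    obtain ⟨S, hS⟩ := mem_iUnion.mp hx
    exact mem_iUnion.mpr ⟨⟨S.1, S.2, hS.1⟩, hS⟩
  · intro x hx
    obtain ⟨a, ha⟩ := mem_iUnion.mp hx
    exact mem_iUnion.mpr ⟨⟨a.1, a.2.1⟩, ha⟩
theorem isOpen_Vset (n : ℕ) : IsOpen (Vset pou n) :=
  isOpen_iUnion fun S => isOpen_Wset pou S.1

end Dold

theorem trivOn_loopBundle (gpd : TopGroupoidOver X C) (x₀ : X) (hLT : gpd.LocTrivial x₀)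
    (κ : GpdContraction gpd x₀) : (loopBundle gpd x₀ hLT).TrivOn κ.U := by
  obtain ⟨φ, h1, h2, h3⟩ := trivHomeo gpd x₀ κ
  refine ⟨φ, fun z => h1 z, ?_⟩
  intro z g hz
  exact h3 z g (z.1.2.trans g.2.2.symm) _ hz

theorem numerable_loopBundle (gpd : TopGroupoidOver X C) (x₀ : X) (hLT : gpd.LocTrivial x₀)
    (pou : PartitionOfUnity (GpdContraction gpd x₀) X univ)
    (hsub : pou.IsSubordinate fun κ => κ.U) : (loopBundle gpd x₀ hLT).Numerable := by
  classical
  refine ⟨ℕ, Vset pou, doldPOU pou, fun n => ⟨isOpen_Vset pou n, ?_⟩,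
    iUnion_Vset pou, doldPOU_isSubordinate pou⟩
  obtain ⟨κ', hκ'U⟩ := glueContraction gpd x₀
    (fun a : {S : Finset (GpdContraction gpd x₀) // S.card = n ∧ S.Nonempty} => Wset pou a.1)
    (fun a => isOpen_Wset pou a.1)
    (fun a b hab => Wset_disjoint pou (a.2.1.trans b.2.1.symm) (fun h => hab (Subtype.ext h)))
    (fun a => a.2.2.choose)
    (fun a => Wset_subset pou hsub a.2.2.choose_spec)
  have hV : Vset pou n = κ'.U := (Vset_eq_iUnion_nonempty pou n).trans hκ'U.symm
  rw [hV]
  exact trivOn_loopBundle gpd x₀ hLT κ'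

end HausmannAux


open HausmannAux

/-- **Theorem A (a)** (Hausmann, "Représentations de groupoïdes topologiques").
For a locally trivial numerable `X`-groupoid `C`, the target map `β : C_* → X`, with the
right `Ω_C`-action `u·c := uc`, is a numerable principal `Ω_C`-bundle: for every
`C`-contraction `ρ` the map `ψ̂_ρ(u) = (β(u), ρ(β(u))·u)` is an `Ω_C`-equivariant
homeomorphism `β⁻¹(U_ρ) ≃ U_ρ × Ω_C` over `U_ρ`; moreover `w̃(c,u) := c·u` defines a
representation of `C` on this bundle. -/
theorem statement0 {X C : Type*} [TopologicalSpace X] [TopologicalSpace C]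
    (gpd : TopGroupoidOver X C) (x₀ : X)
    (hnum : gpd.LocTrivNumerable x₀) :
    ∃ ξ : PrincipalGSpace X {u : C // gpd.src u = x₀} (OmegaGp gpd x₀),
      -- the bundle projection is the target map β
      (∀ u : {u : C // gpd.src u = x₀}, ξ.proj u = gpd.tgt u.1) ∧
      -- the action is u·c := uc
      (∀ (u : {u : C // gpd.src u = x₀}) (c : OmegaGp gpd x₀)
        (h : gpd.src u.1 = gpd.tgt c.1), (ξ.smul u c).1 = gpd.comp u.1 c.1 h) ∧
      -- it is a numerable principal Ω_C-bundle
      ξ.IsBundle ∧ ξ.Numerable ∧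
      -- explicit equivariant trivializations over each U_ρ given by ψ̂_ρ
      (∀ κ : GpdContraction gpd x₀,
        ∃ φ : {u : {u : C // gpd.src u = x₀} // gpd.tgt u.1 ∈ κ.U} ≃ₜ ↥κ.U × OmegaGp gpd x₀,
          (∀ u, ((φ u).1 : X) = gpd.tgt u.1.1) ∧
          (∀ u (h : gpd.src (κ.map ⟨gpd.tgt u.1.1, u.2⟩) = gpd.tgt u.1.1),
            ((φ u).2).1 = gpd.comp (κ.map ⟨gpd.tgt u.1.1, u.2⟩) u.1.1 h) ∧
          (∀ u (c : OmegaGp gpd x₀) (h : gpd.src u.1.1 = gpd.tgt c.1)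
            (hs : gpd.src (gpd.comp u.1.1 c.1 h) = x₀)
            (hm : gpd.tgt (gpd.comp u.1.1 c.1 h) ∈ κ.U),
            φ ⟨⟨gpd.comp u.1.1 c.1 h, hs⟩, hm⟩ = ((φ u).1, (φ u).2 * c))) ∧
      -- w̃(c,u) := cu is a representation of C on this bundle
      ∃ wrep : GroupoidRep gpd ξ,
        ∀ (c : C) (u : {u : C // gpd.src u = x₀}) (h : gpd.src c = ξ.proj u)
          (h' : gpd.src c = gpd.tgt u.1), (wrep.w c u h).1 = gpd.comp c u.1 h' := by
  classical
  obtain ⟨hLT, pou, hsubord⟩ := hnum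
  refine ⟨loopBundle gpd x₀ hLT, fun u => rfl, fun u c h => rfl, ?_, ?_, ?_, ?_⟩
  · intro x
    obtain ⟨κ, hx⟩ := hLT x
    exact ⟨κ.U, κ.isOpen, hx, trivOn_loopBundle gpd x₀ hLT κ⟩
  · exact numerable_loopBundle gpd x₀ hLT pou hsubord
  · exact fun κ => trivHomeo gpd x₀ κ
  · refine ⟨⟨fun c u h => ⟨gpd.comp c u.1 h, (gpd.src_comp _ _ _).trans u.2⟩,
      ?_, ?_, ?_, ?_, ?_⟩, ?_⟩
    · apply Continuous.subtype_mk
      exact gpd.continuous_comp'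
        (f := fun q : {q : C × ESp gpd x₀ //
          gpd.src q.1 = (loopBundle gpd x₀ hLT).proj q.2} => q.1.1)
        (g := fun q => q.1.2.1)
        (continuous_fst.comp continuous_subtype_val)
        (continuous_subtype_val.comp (continuous_snd.comp continuous_subtype_val))
        (fun q => q.2)
    · exact fun c z h => gpd.tgt_comp _ _ _
    · exact fun c d z hcd hdz h₁ h₂ => Subtype.ext (gpd.comp_assoc _ _ _ _ _ _ _)
    · exact fun c z h h' => Subtype.ext (gpd.ginv_comp_comp c z.1 h h')
    · exact fun c z g h h' => Subtype.ext (gpd.comp_assoc _ _ _ _ _ _ _).symm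
    · exact fun c u h h' => rfl
end

section
/- Let ξ = (p : E → X) be a numerable principal G-bundle with G a SIN topological group. Then the sets O^𝒢(K,V) form a fundamental system of entourages of a uniform structure U_𝒢 on the gauge group 𝒢, the multiplication (composition) 𝒢 × 𝒢 → 𝒢 and the inversion χ ↦ χ⁻¹ are uniformly continuous with respect to U_𝒢 (so 𝒢 with the induced topology is a topological group), and moreover 𝒢 is itself SIN. -/
open Set Topology Filter

variable {X C E G : Type*} [TopologicalSpace X] [TopologicalSpace C] [TopologicalSpace E]
  [TopologicalSpace G] [Group G]

section GaugeAux
open Uniformity SetRel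
set_option linter.unusedSectionVars false

variable {X E G : Type*} [TopologicalSpace X] [TopologicalSpace E]
  [TopologicalSpace G] [Group G] [IsTopologicalGroup G] (ξ : PrincipalGSpace X E G)

lemma gaugeEnt_mono {K K' : Set X} {V V' : Set G} (hK : K ⊆ K') (hV : V ⊆ V') :
    gaugeEnt ξ K' V ⊆ gaugeEnt ξ K V' := fun p hp z hz => by
  obtain ⟨v, hv, h⟩ := hp z (hK hz); exact ⟨v, hV hv, h⟩

lemma gauge_smul_cancel (z : E) (v : G) : ξ.smul (ξ.smul z v) v⁻¹ = z := by
  rw [ξ.smul_mul, mul_inv_cancel, ξ.smul_one]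

lemma gaugeEnt_refl {K : Set X} {V : Set G} (h1 : (1 : G) ∈ V) :
    SetRel.id ⊆ gaugeEnt ξ K V := by
  rintro ⟨a, b⟩ h z hz
  rw [SetRel.mem_id] at h
  subst h
  exact ⟨1, h1, (ξ.smul_one _).symm⟩

lemma gaugeEnt_symm {K : Set X} {V : Set G} (hV : ∀ v ∈ V, v⁻¹ ∈ V)
    {p : GaugeGp ξ × GaugeGp ξ} (hp : p ∈ gaugeEnt ξ K V) :
    (p.2, p.1) ∈ gaugeEnt ξ K V := fun z hz => by
  obtain ⟨v, hv, h⟩ := hp z hz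
  exact ⟨v⁻¹, hV v hv, by rw [h, gauge_smul_cancel]⟩

lemma gaugeEnt_comp {K : Set X} {V W : Set G} (hW : ∀ a ∈ W, ∀ b ∈ W, a * b ∈ V) :
    gaugeEnt ξ K W ○ gaugeEnt ξ K W ⊆ gaugeEnt ξ K V := by
  rintro ⟨a, c⟩ ⟨b, hab, hbc⟩ z hz
  obtain ⟨v, hv, h1⟩ := hab z hz
  obtain ⟨w, hw, h2⟩ := hbc z hz
  exact ⟨w * v, hW w hw v hv, by rw [h1, h2, ξ.smul_mul]⟩

lemma gaugeEnt_mul {K : Set X} {V W : Set G} (hW : ∀ a ∈ W, ∀ b ∈ W, a * b ∈ V)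
    {χ₁ χ₂ ψ₁ ψ₂ : GaugeGp ξ} (hχ : (χ₁, χ₂) ∈ gaugeEnt ξ K W)
    (hψ : (ψ₁, ψ₂) ∈ gaugeEnt ξ K W) :
    (GaugeGp.mul χ₁ ψ₁, GaugeGp.mul χ₂ ψ₂) ∈ gaugeEnt ξ K V := fun z hz => by
  obtain ⟨w, hw, h2⟩ := hψ z hz
  have hz2 : ξ.proj (ψ₂.1 z) ∈ K := by rw [ψ₂.2.1 z]; exact hz
  obtain ⟨v, hv, h1⟩ := hχ (ψ₂.1 z) hz2
  refine ⟨v * w, hW v hv w hw, ?_⟩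
  show χ₁.1 (ψ₁.1 z) = ξ.smul (χ₂.1 (ψ₂.1 z)) (v * w)
  rw [h2, χ₁.2.2, h1, ξ.smul_mul]

lemma gaugeEnt_inv {K : Set X} {V : Set G} (hV : ∀ v ∈ V, v⁻¹ ∈ V)
    {χ₁ χ₂ : GaugeGp ξ} (h : (χ₁, χ₂) ∈ gaugeEnt ξ K V) :
    (GaugeGp.inv χ₁, GaugeGp.inv χ₂) ∈ gaugeEnt ξ K V := fun z hz => by
  have hz2 : ξ.proj (χ₂.1.symm z) ∈ K := by
    have e : ξ.proj (χ₂.1.symm z) = ξ.proj z := (GaugeGp.inv χ₂).2.1 z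
    rw [e]; exact hz
  obtain ⟨v, hv, h1⟩ := h (χ₂.1.symm z) hz2
  rw [χ₂.1.apply_symm_apply] at h1
  refine ⟨v⁻¹, hV v hv, ?_⟩
  have e1 : χ₂.1.symm z = ξ.smul (χ₁.1.symm z) v := by
    have e2 : χ₁.1.symm (ξ.smul z v) = ξ.smul (χ₁.1.symm z) v := (GaugeGp.inv χ₁).2.2 z v
    have := congrArg χ₁.1.symm h1
    rwa [χ₁.1.symm_apply_apply, e2] at this
  show χ₁.1.symm z = ξ.smul (χ₂.1.symm z) v⁻¹
  rw [e1, gauge_smul_cancel]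

lemma gaugeEnt_conj {K : Set X} {V : Set G} {χ : GaugeGp ξ} (ψ : GaugeGp ξ)
    (h : (GaugeGp.id ξ, χ) ∈ gaugeEnt ξ K V) :
    (GaugeGp.id ξ, GaugeGp.mul (GaugeGp.mul (GaugeGp.inv ψ) χ) ψ) ∈ gaugeEnt ξ K V := by
  intro z hz
  have hz2 : ξ.proj (ψ.1 z) ∈ K := by rw [ψ.2.1 z]; exact hz
  obtain ⟨v, hv, h1⟩ := h (ψ.1 z) hz2
  refine ⟨v, hv, ?_⟩
  show z = ξ.smul (ψ.1.symm (χ.1 (ψ.1 z))) v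
  have h1' : ψ.1 z = ξ.smul (χ.1 (ψ.1 z)) v := h1
  have e2 : ψ.1.symm (ξ.smul (χ.1 (ψ.1 z)) v) = ξ.smul (ψ.1.symm (χ.1 (ψ.1 z))) v :=
    (GaugeGp.inv ψ).2.2 _ v
  have := congrArg ψ.1.symm h1'
  rwa [ψ.1.symm_apply_apply, e2] at this

lemma exists_symm_sq {V : Set G} (hV : SymmNhd V) :
    ∃ W : Set G, SymmNhd W ∧ ∀ a ∈ W, ∀ b ∈ W, a * b ∈ V := by
  obtain ⟨W₀, hW₀o, hW₀1, hW₀m⟩ :=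
    exists_open_nhds_one_mul_subset (hV.1.mem_nhds hV.2.1)
  refine ⟨W₀ ∩ W₀⁻¹, ⟨hW₀o.inter hW₀o.inv, ⟨hW₀1, by simpa using hW₀1⟩, ?_⟩, ?_⟩
  · rintro v ⟨h1, h2⟩
    exact ⟨h2, by simpa using h1⟩
  · intro a ha b hb
    exact hW₀m (Set.mul_mem_mul ha.1 hb.1)

/-- The canonical uniformity core on the gauge group. -/
def gaugeUnifCore : UniformSpace.Core (GaugeGp ξ) where
  uniformity := ⨅ (s : Set X × Set G) (_ : IsCompact s.1 ∧ SymmNhd s.2),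
    𝓟 (gaugeEnt ξ s.1 s.2)
  refl := le_iInf₂ fun s hs => by
    rw [le_principal_iff, mem_principal]
    exact gaugeEnt_refl ξ hs.2.2.1
  symm := by
    have hB := Filter.hasBasis_biInf_principal'
      (fun i (hi : IsCompact i.1 ∧ SymmNhd i.2) j hj =>
        ⟨(i.1 ∪ j.1, i.2 ∩ j.2),
          ⟨hi.1.union hj.1,
            ⟨hi.2.1.inter hj.2.1, ⟨hi.2.2.1, hj.2.2.1⟩,
              fun v hv => ⟨hi.2.2.2 v hv.1, hj.2.2.2 v hv.2⟩⟩⟩,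
          gaugeEnt_mono ξ subset_union_left inter_subset_left,
          gaugeEnt_mono ξ subset_union_right inter_subset_right⟩)
      ⟨((∅ : Set X), (univ : Set G)),
        isCompact_empty, isOpen_univ, mem_univ _, fun _ _ => mem_univ _⟩
      (s := fun s : Set X × Set G => gaugeEnt ξ s.1 s.2)
    rw [hB.tendsto_right_iff]
    intro s hs
    filter_upwards [hB.mem_of_mem hs] with p hp
    exact gaugeEnt_symm ξ hs.2.2.2 hp
  comp := le_iInf₂ fun s hs => by
    rw [le_principal_iff]
    obtain ⟨W, hW, hWm⟩ := exists_symm_sq (hV := hs.2)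
    have hmem : gaugeEnt ξ s.1 W ∈
        ⨅ (s : Set X × Set G) (_ : IsCompact s.1 ∧ SymmNhd s.2),
          𝓟 (gaugeEnt ξ s.1 s.2) := by
      refine mem_iInf_of_mem (s.1, W) (mem_iInf_of_mem ⟨hs.1, hW⟩ ?_)
      exact mem_principal_self _
    exact mem_of_superset (mem_lift' hmem) (gaugeEnt_comp ξ hWm)

lemma gaugeUnif_hasBasis :
    (gaugeUnifCore ξ).uniformity.HasBasis
      (fun s : Set X × Set G => IsCompact s.1 ∧ SymmNhd s.2)
      (fun s => gaugeEnt ξ s.1 s.2) :=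
  Filter.hasBasis_biInf_principal'
    (fun i (hi : IsCompact i.1 ∧ SymmNhd i.2) j hj =>
      ⟨(i.1 ∪ j.1, i.2 ∩ j.2),
        ⟨hi.1.union hj.1,
          ⟨hi.2.1.inter hj.2.1, ⟨hi.2.2.1, hj.2.2.1⟩,
            fun v hv => ⟨hi.2.2.2 v hv.1, hj.2.2.2 v hv.2⟩⟩⟩,
        gaugeEnt_mono ξ subset_union_left inter_subset_left,
        gaugeEnt_mono ξ subset_union_right inter_subset_right⟩)
    ⟨((∅ : Set X), (univ : Set G)),
      isCompact_empty, isOpen_univ, mem_univ _, fun _ _ => mem_univ _⟩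

end GaugeAux

/-- **Proposition (unicalg)**. For a numerable principal `G`-bundle with `G` SIN, the sets
`O^𝒢(K,V)` form a fundamental system of entourages of a uniform structure `U_𝒢` on the gauge
group `𝒢`; composition and inversion are uniformly continuous for `U_𝒢` (so `𝒢` is a
topological group), and `𝒢` is itself SIN. -/
theorem statement3 {X E G : Type*} [TopologicalSpace X] [TopologicalSpace E]
    [TopologicalSpace G] [Group G] [IsTopologicalGroup G]
    (ξ : PrincipalGSpace X E G) (hbdl : ξ.IsBundle) (hnum : ξ.Numerable)
    (hSIN : IsSIN G) :
    ∃ 𝔘 : UniformSpace (GaugeGp ξ),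
      -- the O^𝒢(K,V) are a fundamental system of entourages of U_𝒢
      (@uniformity _ 𝔘).HasBasis
        (fun s : Set X × Set G => IsCompact s.1 ∧ SymmNhd s.2)
        (fun s => gaugeEnt ξ s.1 s.2) ∧
      -- multiplication (composition) is uniformly continuous
      (@UniformContinuous _ _ (@instUniformSpaceProd _ _ 𝔘 𝔘) 𝔘
        fun p : GaugeGp ξ × GaugeGp ξ => GaugeGp.mul p.1 p.2) ∧
      -- inversion is uniformly continuous
      (@UniformContinuous _ _ 𝔘 𝔘 fun χ : GaugeGp ξ => GaugeGp.inv χ) ∧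
      -- 𝒢 is SIN (for the topology induced by U_𝒢)
      (∀ S ∈ @nhds _ 𝔘.toTopologicalSpace (GaugeGp.id ξ),
        ∃ T ∈ @nhds _ 𝔘.toTopologicalSpace (GaugeGp.id ξ), T ⊆ S ∧
          ∀ χ ∈ T, ∀ ψ : GaugeGp ξ,
            GaugeGp.mul (GaugeGp.mul (GaugeGp.inv ψ) χ) ψ ∈ T) := by
  classical
  refine ⟨UniformSpace.ofCore (gaugeUnifCore ξ), ?_, ?_, ?_, ?_⟩
  · exact gaugeUnif_hasBasis ξ
  · -- multiplication is uniformly continuous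
    letI 𝔘 : UniformSpace (GaugeGp ξ) := UniformSpace.ofCore (gaugeUnifCore ξ)
    have hB : (uniformity (GaugeGp ξ)).HasBasis
        (fun s : Set X × Set G => IsCompact s.1 ∧ SymmNhd s.2)
        (fun s => gaugeEnt ξ s.1 s.2) := gaugeUnif_hasBasis ξ
    rw [UniformContinuous, hB.tendsto_right_iff]
    rintro ⟨K, V⟩ ⟨hK, hV⟩
    obtain ⟨W, hW, hWm⟩ := exists_symm_sq (hV := hV)
    have hWent : gaugeEnt ξ K W ∈ uniformity (GaugeGp ξ) :=
      hB.mem_of_mem (i := (K, W)) ⟨hK, hW⟩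
    rw [eventually_iff_exists_mem]
    refine ⟨((fun p : (GaugeGp ξ × GaugeGp ξ) × GaugeGp ξ × GaugeGp ξ =>
        (p.1.1, p.2.1)) ⁻¹' gaugeEnt ξ K W) ∩
      ((fun p : (GaugeGp ξ × GaugeGp ξ) × GaugeGp ξ × GaugeGp ξ =>
        (p.1.2, p.2.2)) ⁻¹' gaugeEnt ξ K W), ?_, ?_⟩
    · rw [uniformity_prod]
      exact inter_mem_inf (preimage_mem_comap hWent) (preimage_mem_comap hWent)
    · rintro ⟨p, q⟩ ⟨h1, h2⟩
      exact gaugeEnt_mul ξ hWm h1 h2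
  · -- inversion is uniformly continuous
    letI 𝔘 : UniformSpace (GaugeGp ξ) := UniformSpace.ofCore (gaugeUnifCore ξ)
    have hB : (uniformity (GaugeGp ξ)).HasBasis
        (fun s : Set X × Set G => IsCompact s.1 ∧ SymmNhd s.2)
        (fun s => gaugeEnt ξ s.1 s.2) := gaugeUnif_hasBasis ξ
    rw [UniformContinuous, hB.tendsto_right_iff]
    rintro ⟨K, V⟩ ⟨hK, hV⟩
    have hVent : gaugeEnt ξ K V ∈ uniformity (GaugeGp ξ) :=
      hB.mem_of_mem (i := (K, V)) ⟨hK, hV⟩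
    rw [eventually_iff_exists_mem]
    exact ⟨gaugeEnt ξ K V, hVent, fun p hp => gaugeEnt_inv ξ hV.2.2 hp⟩
  · -- SIN
    letI 𝔘 : UniformSpace (GaugeGp ξ) := UniformSpace.ofCore (gaugeUnifCore ξ)
    have hB : (uniformity (GaugeGp ξ)).HasBasis
        (fun s : Set X × Set G => IsCompact s.1 ∧ SymmNhd s.2)
        (fun s => gaugeEnt ξ s.1 s.2) := gaugeUnif_hasBasis ξ
    intro S hS
    rw [UniformSpace.mem_nhds_iff] at hS
    obtain ⟨U, hU, hUS⟩ := hS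
    obtain ⟨⟨K, V⟩, ⟨hK, hV⟩, hKV⟩ := hB.mem_iff.mp hU
    refine ⟨UniformSpace.ball (GaugeGp.id ξ) (gaugeEnt ξ K V), ?_, ?_, ?_⟩
    · exact UniformSpace.ball_mem_nhds _
        (hB.mem_of_mem (i := (K, V)) ⟨hK, hV⟩)
    · exact subset_trans (fun x hx => hKV hx) hUS
    · intro χ hχ ψ
      exact gaugeEnt_conj ξ ψ hχ
end

section
/- Let ξ = (p : E → X) be a numerable principal G-bundle with G a SIN topological group, pointed by ̃* ∈ p⁻¹(*). Define res : 𝒢 → G by χ( ̃*) = ̃*·res(χ). Then res is a group homomorphism with kernel 𝒢₁, and res is uniformly continuous from (𝒢, U_𝒢) to G equipped with the uniformity whose basic entourages are {(g̃,g) : g̃g⁻¹ ∈ V} for V a symmetric open neighborhood of e. -/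
open Set Topology Filter

variable {X C E G : Type*} [TopologicalSpace X] [TopologicalSpace C] [TopologicalSpace E]
  [TopologicalSpace G] [Group G]

/-- **Proposition (numer), first part**. For a numerable principal `G`-bundle with `G` SIN,
the restriction map `res : 𝒢 → G`, defined by `χ( ̃*) = ̃*·res(χ)`, is a group homomorphism
with kernel `𝒢₁`, uniformly continuous from `(𝒢, U_𝒢)` to `G` with its canonical (right)
uniformity. -/
theorem statement4 {X E G : Type*} [TopologicalSpace X] [TopologicalSpace E]
    [TopologicalSpace G] [Group G] [IsTopologicalGroup G]
    (ξ : PrincipalGSpace X E G) (hbdl : ξ.IsBundle) (hnum : ξ.Numerable)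
    (hSIN : IsSIN G) (x₀ : X) (e₀ : E) (he₀ : ξ.proj e₀ = x₀)
    (res : GaugeGp ξ → G) (hres : ∀ χ : GaugeGp ξ, χ.1 e₀ = ξ.smul e₀ (res χ)) :
    -- res is a homomorphism
    (∀ χ ψ : GaugeGp ξ, res (GaugeGp.mul χ ψ) = res χ * res ψ) ∧
    (res (GaugeGp.id ξ) = 1) ∧
    -- with kernel 𝒢₁
    (∀ χ : GaugeGp ξ, res χ = 1 ↔ χ.1 e₀ = e₀) ∧
    -- res is uniformly continuous from (𝒢, U_𝒢) to G with its canonical uniformity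
    (∀ 𝔘 : UniformSpace (GaugeGp ξ),
      (@uniformity _ 𝔘).HasBasis
        (fun s : Set X × Set G => IsCompact s.1 ∧ SymmNhd s.2)
        (fun s => gaugeEnt ξ s.1 s.2) →
      ∀ 𝔙 : UniformSpace G,
        (@uniformity _ 𝔙).HasBasis (fun V : Set G => SymmNhd V) (fun V => grpEnt G V) →
        @UniformContinuous _ _ 𝔘 𝔙 res) := by
  -- cancellation from freeness
  have cancel : ∀ (z : E) (a b : G), ξ.smul z a = ξ.smul z b → a = b := by
    intro z a b h
    have : ξ.smul (ξ.smul z b) (b⁻¹ * a) = ξ.smul z b := by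
      rw [ξ.smul_mul, mul_inv_cancel_left, h]
    have := ξ.free _ _ this
    rwa [inv_mul_eq_one, eq_comm] at this
  have hmul : ∀ χ ψ : GaugeGp ξ, res (GaugeGp.mul χ ψ) = res χ * res ψ := by
    intro χ ψ
    apply cancel e₀
    rw [← ξ.smul_mul, ← hres χ, ← χ.2.2, ← hres ψ]
    exact (hres (GaugeGp.mul χ ψ)).symm
  refine ⟨hmul, ?_, ?_, ?_⟩
  · apply cancel e₀
    rw [← hres, ξ.smul_one]; rfl
  · intro χ
    constructor
    · intro h; rw [hres χ, h, ξ.smul_one]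
    · intro h
      apply cancel e₀
      rw [← hres, h, ξ.smul_one]
  · intro 𝔘 h𝔘 𝔙 h𝔙
    rw [UniformContinuous, h𝔙.tendsto_right_iff]
    rintro V ⟨hVo, hV1, hVs⟩
    obtain ⟨W, hWn, hWV, hWc⟩ := hSIN V (hVo.mem_nhds hV1)
    set W' : Set G := interior W ∩ (interior W)⁻¹ with hW'
    have hW'W : W' ⊆ W := fun v hv => interior_subset hv.1
    have hW'symm : SymmNhd W' := by
      refine ⟨(isOpen_interior.inter isOpen_interior.inv), ?_, ?_⟩
      · have h1 : (1 : G) ∈ interior W := mem_interior_iff_mem_nhds.2 hWn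
        exact ⟨h1, by simpa using h1⟩
      · rintro v ⟨h1, h2⟩
        exact ⟨by simpa using h2, by simpa using h1⟩
    rw [h𝔘.eventually_iff]
    refine ⟨({x₀}, W'), ⟨isCompact_singleton, hW'symm⟩, ?_⟩
    rintro ⟨χ, ψ⟩ hp
    obtain ⟨v, hv, hveq⟩ := hp e₀ (by simpa using he₀)
    have : res χ = res ψ * v := by
      apply cancel e₀
      rw [← ξ.smul_mul, ← hres ψ, ← hres χ]
      exact hveq
    have : res χ * (res ψ)⁻¹ = res ψ * v * (res ψ)⁻¹ := by rw [this]
    show res χ * (res ψ)⁻¹ ∈ V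
    rw [this]
    exact hWV (hWc v (hW'W hv) (res ψ))
end

section
/- Let ξ = (p : E → X) be a numerable principal G-bundle, pointed by ̃* ∈ p⁻¹(*), with G path-connected. Then the homomorphism res : 𝒢 → G, defined by χ( ̃*) = ̃*·res(χ), is surjective: for every g ∈ G there exists a gauge transformation χ ∈ 𝒢 with χ( ̃*) = ̃*·g. -/
open Set Topology Filter

variable {X C E G : Type*} [TopologicalSpace X] [TopologicalSpace C] [TopologicalSpace E]
  [TopologicalSpace G] [Group G]

/-!
Choose a trivializing open set `U` carrying a function `ρ` of the partition of unity with
`ρ(p ̃*) > 0`, and let `σ : p⁻¹(U) → G` be the `G`-coordinate of the trivialization, so that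
`σ(z·h) = σ(z) h`. Path-connectedness of `G` gives a continuous `a : X → G` supported in
`supp ρ ⊆ U` with `a(p ̃*) = σ(̃*) g σ(̃*)⁻¹` (run along a path from `1` with parameter
`ρ / ρ(p ̃*)`). Then `τ(z) = σ(z)⁻¹ a(p z) σ(z)`, extended by `1` off `p⁻¹(U)`, is continuous and
satisfies `τ(z·h) = h⁻¹ τ(z) h`, which is exactly what makes `z ↦ z·τ(z)` a gauge
transformation; at `̃*` it acts by `τ(̃*) = g`.
-/

theorem exists_continuous_mulTSupport_subset_tsupport {M : Type*} [TopologicalSpace M] [One M]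
    [PathConnectedSpace M] {f : X → ℝ} (hf : Continuous f) {x₀ : X} (hx₀ : f x₀ ≠ 0) (m : M) :
    ∃ a : X → M, Continuous a ∧ mulTSupport a ⊆ tsupport f ∧ a x₀ = m := by
  let γ := PathConnectedSpace.somePath (1 : M) m
  refine ⟨fun x => γ.extend (f x / f x₀), γ.continuous_extend.comp (hf.div_const _),
    closure_mono fun x hx hfx => hx ?_, by simp [hx₀]⟩
  simp [hfx]

namespace PrincipalGSpace

variable {ξ : PrincipalGSpace X E G}

theorem TrivOn.exists_equivariant_coord {U : Set X} (h : ξ.TrivOn U) :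
    ∃ σ : {z : E // ξ.proj z ∈ U} → G, Continuous σ ∧
      ∀ z g (hz : ξ.proj (ξ.smul z.1 g) ∈ U), σ ⟨ξ.smul z.1 g, hz⟩ = σ z * g := by
  obtain ⟨φ, -, hφ⟩ := h
  exact ⟨fun z => (φ z).2, continuous_snd.comp φ.continuous,
    fun z g hz => by simp only [hφ z g hz]⟩

theorem exists_gauge_apply_eq_smul [ContinuousInv G] {τ : E → G} (hτ : Continuous τ)
    (hτ_smul : ∀ z g, τ (ξ.smul z g) = g⁻¹ * τ z * g) :
    ∃ χ : GaugeGp ξ, ∀ z, χ.1 z = ξ.smul z (τ z) := by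
  have hτ_smul_self : ∀ z, τ (ξ.smul z (τ z)) = τ z := fun z => by
    rw [hτ_smul]; group
  have hτ_smul_inv_self : ∀ z, τ (ξ.smul z (τ z)⁻¹) = τ z := fun z => by
    rw [hτ_smul]; group
  let χ : E ≃ₜ E :=
    { toFun := fun z => ξ.smul z (τ z)
      invFun := fun z => ξ.smul z (τ z)⁻¹
      left_inv := fun z => by simp only [hτ_smul_self, ξ.smul_mul, mul_inv_cancel, ξ.smul_one]
      right_inv := fun z => by
        simp only [hτ_smul_inv_self, ξ.smul_mul, inv_mul_cancel, ξ.smul_one]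
      continuous_toFun := ξ.continuous_smul.comp (continuous_id.prodMk hτ)
      continuous_invFun := ξ.continuous_smul.comp (continuous_id.prodMk hτ.inv) }
  refine ⟨⟨χ, fun z => ξ.proj_smul z (τ z), fun z g => ?_⟩, fun z => rfl⟩
  change ξ.smul (ξ.smul z g) (τ (ξ.smul z g)) = ξ.smul (ξ.smul z (τ z)) g
  rw [hτ_smul, ξ.smul_mul, ξ.smul_mul]
  group

variable (ξ)

open Classical in
noncomputable def conjByCoord (U : Set X) (σ : {z : E // ξ.proj z ∈ U} → G) (a : X → G)
    (z : E) : G :=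
  if hz : ξ.proj z ∈ U then (σ ⟨z, hz⟩)⁻¹ * a (ξ.proj z) * σ ⟨z, hz⟩ else 1

variable {ξ} {U : Set X} {σ : {z : E // ξ.proj z ∈ U} → G} {a : X → G}

theorem conjByCoord_of_mem {z : E} (hz : ξ.proj z ∈ U) :
    ξ.conjByCoord U σ a z = (σ ⟨z, hz⟩)⁻¹ * a (ξ.proj z) * σ ⟨z, hz⟩ :=
  dif_pos hz

theorem conjByCoord_smul
    (hσ : ∀ z g (hz : ξ.proj (ξ.smul z.1 g) ∈ U), σ ⟨ξ.smul z.1 g, hz⟩ = σ z * g) (z : E)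
    (g : G) : ξ.conjByCoord U σ a (ξ.smul z g) = g⁻¹ * ξ.conjByCoord U σ a z * g := by
  by_cases hz : ξ.proj z ∈ U
  · have hzg : ξ.proj (ξ.smul z g) ∈ U := (ξ.proj_smul z g).symm ▸ hz
    rw [conjByCoord_of_mem hz, conjByCoord_of_mem hzg, hσ ⟨z, hz⟩ g hzg, ξ.proj_smul]
    group
  · have hzg : ξ.proj (ξ.smul z g) ∉ U := (ξ.proj_smul z g).symm ▸ hz
    simp [conjByCoord, hz, hzg]

theorem continuous_conjByCoord [IsTopologicalGroup G] (hU : IsOpen U) (hσ : Continuous σ)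
    (ha : Continuous a) (haU : mulTSupport a ⊆ U) : Continuous (ξ.conjByCoord U σ a) := by
  have hsupp : mulTSupport (ξ.conjByCoord U σ a) ⊆ ξ.proj ⁻¹' mulTSupport a := by
    refine closure_minimal (fun z hz => subset_mulTSupport a fun haz => hz ?_)
      ((isClosed_mulTSupport a).preimage ξ.continuous_proj)
    by_cases hzU : ξ.proj z ∈ U
    · simp [conjByCoord_of_mem hzU, haz]
    · simp [conjByCoord, hzU]
  refine ContinuousOn.continuous_of_mulTSupport_subset ?_ (hU.preimage ξ.continuous_proj)
    (hsupp.trans (preimage_mono haU))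
  rw [continuousOn_iff_continuous_domRestrict]
  have hrestrict : (ξ.proj ⁻¹' U).domRestrict (ξ.conjByCoord U σ a) =
      fun z => (σ z)⁻¹ * a (ξ.proj z.1) * σ z :=
    funext fun z => conjByCoord_of_mem z.2
  rw [hrestrict]
  exact (hσ.inv.mul (ha.comp (ξ.continuous_proj.comp continuous_subtype_val))).mul hσ

end PrincipalGSpace

theorem statement5_general {X E G : Type*} [TopologicalSpace X] [TopologicalSpace E]
    [TopologicalSpace G] [Group G] [IsTopologicalGroup G]
    (ξ : PrincipalGSpace X E G) (hnum : ξ.Numerable)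
    (hconn : PathConnectedSpace G) (e₀ : E) :
    ∀ g : G, ∃ χ : GaugeGp ξ, χ.1 e₀ = ξ.smul e₀ g := by
  intro g
  obtain ⟨ι, U, ρ, hU, -, hρU⟩ := hnum
  obtain ⟨i, hi⟩ := ρ.exists_pos (mem_univ (ξ.proj e₀))
  obtain ⟨σ, hσ, hσ_smul⟩ := (hU i).2.exists_equivariant_coord
  have he₀U : ξ.proj e₀ ∈ U i := hρU i (subset_tsupport _ hi.ne')
  obtain ⟨a, ha, haρ, ha_e₀⟩ := exists_continuous_mulTSupport_subset_tsupport (ρ i).continuous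
    hi.ne' (σ ⟨e₀, he₀U⟩ * g * (σ ⟨e₀, he₀U⟩)⁻¹)
  obtain ⟨χ, hχ⟩ := ξ.exists_gauge_apply_eq_smul
    (PrincipalGSpace.continuous_conjByCoord (a := a) (hU i).1 hσ ha (haρ.trans (hρU i)))
    (PrincipalGSpace.conjByCoord_smul hσ_smul)
  refine ⟨χ, ?_⟩
  rw [hχ, PrincipalGSpace.conjByCoord_of_mem he₀U, ha_e₀]
  group

/-- **Proposition (numer), second part**. For a numerable principal `G`-bundle with `G`
path-connected, the restriction homomorphism `res : 𝒢 → G` is surjective: for every `g ∈ G`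
there is a gauge transformation `χ` with `χ( ̃*) = ̃*·g`. -/
theorem statement5 {X E G : Type*} [TopologicalSpace X] [TopologicalSpace E]
    [TopologicalSpace G] [Group G] [IsTopologicalGroup G]
    (ξ : PrincipalGSpace X E G) (hbdl : ξ.IsBundle) (hnum : ξ.Numerable)
    (hconn : PathConnectedSpace G) (x₀ : X) (e₀ : E) (he₀ : ξ.proj e₀ = x₀) :
    ∀ g : G, ∃ χ : GaugeGp ξ, χ.1 e₀ = ξ.smul e₀ g :=
  statement5_general ξ hnum hconn e₀
end

section
/- Let C be an X-groupoid, let ξ = (p : E → X) be a numerable principal G-bundle with G SIN, pointed by ̃* ∈ p⁻¹(*). Then the right action R(C,ξ) × 𝒢 → R(C,ξ), (w,χ) ↦ w^χ where w^χ(c,z) := χ⁻¹(w(c,χ(z))), is uniformly continuous with respect to the product of the uniform structures U_R and U_𝒢 on the source and U_R on the target. -/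
open Set Topology Filter

variable {X C E G : Type*} [TopologicalSpace X] [TopologicalSpace C] [TopologicalSpace E]
  [TopologicalSpace G] [Group G]

/-- `w'` is the representation `w^χ`, i.e. `w'(c,z) = χ⁻¹(w(c,χ(z)))`. -/
def IsConjRep {X C E G : Type*} [TopologicalSpace X] [TopologicalSpace C]
    [TopologicalSpace E] [TopologicalSpace G] [Group G]
    {gpd : TopGroupoidOver X C} {ξ : PrincipalGSpace X E G}
    (w : GroupoidRep gpd ξ) (χ : GaugeGp ξ) (w' : GroupoidRep gpd ξ) : Prop :=
  ∀ c z (h : gpd.src c = ξ.proj z) (h' : gpd.src c = ξ.proj (χ.1 z)),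
    w'.w c z h = χ.1.symm (w.w c (χ.1 z) h')

section Aux

variable {gpd : TopGroupoidOver X C} {ξ : PrincipalGSpace X E G}

lemma gauge_symm_proj (χ : GaugeGp ξ) (y : E) : ξ.proj (χ.1.symm y) = ξ.proj y := by
  conv_rhs => rw [← χ.1.apply_symm_apply y]
  exact (χ.2.1 _).symm

lemma gauge_symm_smul (χ : GaugeGp ξ) (y : E) (g : G) :
    χ.1.symm (ξ.smul y g) = ξ.smul (χ.1.symm y) g :=
  χ.1.injective (by rw [χ.1.apply_symm_apply, χ.2.2, χ.1.apply_symm_apply])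

/-- The conjugated representation `w^χ`. -/
def conjRep (w : GroupoidRep gpd ξ) (χ : GaugeGp ξ) : GroupoidRep gpd ξ where
  w c z h := χ.1.symm (w.w c (χ.1 z) (h.trans (χ.2.1 z).symm))
  continuous_w := by
    have hmap : Continuous fun q : {q : C × E // gpd.src q.1 = ξ.proj q.2} =>
        (⟨(q.1.1, χ.1 q.1.2), q.2.trans (χ.2.1 q.1.2).symm⟩ :
          {q : C × E // gpd.src q.1 = ξ.proj q.2}) := by
      apply Continuous.subtype_mk
      exact (continuous_fst.comp continuous_subtype_val).prodMk
        (χ.1.continuous.comp (continuous_snd.comp continuous_subtype_val))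
    exact χ.1.symm.continuous.comp (w.continuous_w.comp hmap)
  proj_w c z h := by rw [gauge_symm_proj, w.proj_w]
  w_comp c d z hcd hdz h₁ h₂ := by
    simp only [Homeomorph.apply_symm_apply]
    rw [w.w_comp c d (χ.1 z) hcd (hdz.trans (χ.2.1 z).symm)]
  w_ginv c z h h' := by
    simp only [Homeomorph.apply_symm_apply]
    rw [w.w_ginv c (χ.1 z) (h.trans (χ.2.1 z).symm), Homeomorph.symm_apply_apply]
  w_smul c z g h h' := by
    simp only [χ.2.2 z g]
    rw [w.w_smul c (χ.1 z) g (h.trans (χ.2.1 z).symm), gauge_symm_smul]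

lemma exists_symm_mul3 {G : Type*} [TopologicalSpace G] [Group G] [IsTopologicalGroup G]
    (V : Set G) (hV : SymmNhd V) :
    ∃ W : Set G, SymmNhd W ∧ ∀ x ∈ W, ∀ y ∈ W, ∀ z ∈ W, x * (y * z) ∈ V := by
  obtain ⟨W₁, hW₁o, hW₁1, hW₁⟩ :=
    exists_open_nhds_one_mul_subset (hV.1.mem_nhds hV.2.1)
  obtain ⟨W₂, hW₂o, hW₂1, hW₂⟩ :=
    exists_open_nhds_one_mul_subset (hW₁o.mem_nhds hW₁1)
  refine ⟨(W₁ ∩ W₂) ∩ (W₁ ∩ W₂)⁻¹,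
    ⟨((hW₁o.inter hW₂o).inter (hW₁o.inter hW₂o).inv),
     ⟨⟨hW₁1, hW₂1⟩, by simpa using And.intro hW₁1 hW₂1⟩,
     fun v hv => ⟨hv.2, by simpa using hv.1⟩⟩, ?_⟩
  intro x hx y hy z hz
  exact hW₁ (Set.mul_mem_mul hx.1.1 (hW₂ (Set.mul_mem_mul hy.1.2 hz.1.2)))

end Aux

/-- **Proposition (unicala)**. The right action `R(C,ξ) × 𝒢 → R(C,ξ)`,
`(w,χ) ↦ w^χ` with `w^χ(c,z) := χ⁻¹(w(c,χ(z)))`, is well defined and uniformly continuous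
for the product of the uniform structures `U_R` and `U_𝒢` on the source and `U_R` on the
target. -/
theorem statement6 {X C E G : Type*} [TopologicalSpace X] [TopologicalSpace C]
    [TopologicalSpace E] [TopologicalSpace G] [Group G] [IsTopologicalGroup G]
    (gpd : TopGroupoidOver X C) (ξ : PrincipalGSpace X E G)
    (hbdl : ξ.IsBundle) (hnum : ξ.Numerable) (hSIN : IsSIN G) :
    -- the action is well defined: w^χ is again a representation
    (∀ (w : GroupoidRep gpd ξ) (χ : GaugeGp ξ), ∃ w', IsConjRep w χ w') ∧
    -- and it is uniformly continuous
    (∀ 𝔘R : UniformSpace (GroupoidRep gpd ξ),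
      (@uniformity _ 𝔘R).HasBasis
        (fun s : Set C × Set G => IsCompact s.1 ∧ SymmNhd s.2)
        (fun s => repEnt gpd ξ s.1 s.2) →
      ∀ 𝔘G : UniformSpace (GaugeGp ξ),
        (@uniformity _ 𝔘G).HasBasis
          (fun s : Set X × Set G => IsCompact s.1 ∧ SymmNhd s.2)
          (fun s => gaugeEnt ξ s.1 s.2) →
        ∀ act : GroupoidRep gpd ξ × GaugeGp ξ → GroupoidRep gpd ξ,
          (∀ p, IsConjRep p.1 p.2 (act p)) →
          @UniformContinuous _ _ (@instUniformSpaceProd _ _ 𝔘R 𝔘G) 𝔘R act) := by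
  constructor
  · intro w χ
    exact ⟨conjRep w χ, fun c z h h' => rfl⟩
  · intro 𝔘R hR 𝔘G hG act hact
    letI := 𝔘R; letI := 𝔘G
    rw [UniformContinuous, uniformity_prod_eq_prod, Filter.tendsto_map'_iff]
    refine ((hR.prod hG).tendsto_iff hR).2 ?_
    rintro ⟨L, V⟩ ⟨hL, hV⟩
    obtain ⟨W, hW, hWV⟩ := exists_symm_mul3 V hV
    refine ⟨((L, W), (gpd.src '' L ∪ gpd.tgt '' L, W)),
      ⟨⟨hL, hW⟩, ⟨(hL.image gpd.continuous_src).union (hL.image gpd.continuous_tgt), hW⟩⟩, ?_⟩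
    rintro ⟨⟨w, w'⟩, χ, χ'⟩ hx
    have hw : (w, w') ∈ repEnt gpd ξ L W := hx.1
    have hχ : (χ, χ') ∈ gaugeEnt ξ (gpd.src '' L ∪ gpd.tgt '' L) W := hx.2
    intro c hc z h
    have hz : ξ.proj z ∈ gpd.src '' L ∪ gpd.tgt '' L := Or.inl ⟨c, hc, h⟩
    obtain ⟨a, haW, hχz⟩ := hχ z hz
    have hχ'z : gpd.src c = ξ.proj (χ'.1 z) := h.trans (χ'.2.1 z).symm
    have hχz' : gpd.src c = ξ.proj (χ.1 z) := h.trans (χ.2.1 z).symm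
    set y₀ := w'.w c (χ'.1 z) hχ'z with hy₀
    obtain ⟨b, hbW, hwb⟩ := hw c hc (χ'.1 z) hχ'z
    have h1 : w.w c (χ.1 z) hχz' = ξ.smul y₀ (b * a) := by
      simp only [hχz]
      rw [w.w_smul c (χ'.1 z) a hχ'z, hwb, ξ.smul_mul]
    have hy₀K : ξ.proj y₀ ∈ gpd.src '' L ∪ gpd.tgt '' L :=
      Or.inr ⟨c, hc, (w'.proj_w c (χ'.1 z) hχ'z).symm⟩
    have hz' : ξ.proj (χ.1.symm y₀) ∈ gpd.src '' L ∪ gpd.tgt '' L := by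
      rw [gauge_symm_proj]; exact hy₀K
    obtain ⟨v, hvW, hv⟩ := hχ (χ.1.symm y₀) hz'
    rw [Homeomorph.apply_symm_apply] at hv
    have h2 : ξ.smul y₀ v⁻¹ = χ'.1 (χ.1.symm y₀) := by
      conv_lhs => rw [hv]
      rw [ξ.smul_mul, mul_inv_cancel, ξ.smul_one]
    have h3 : χ.1.symm y₀ = ξ.smul (χ'.1.symm y₀) v⁻¹ := by
      calc χ.1.symm y₀ = χ'.1.symm (χ'.1 (χ.1.symm y₀)) := (χ'.1.symm_apply_apply _).symm
        _ = χ'.1.symm (ξ.smul y₀ v⁻¹) := by rw [h2]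
        _ = ξ.smul (χ'.1.symm y₀) v⁻¹ := gauge_symm_smul χ' y₀ v⁻¹
    refine ⟨v⁻¹ * (b * a), hWV v⁻¹ (hW.2.2 v hvW) b hbW a haW, ?_⟩
    show (act (w, χ)).w c z h = ξ.smul ((act (w', χ')).w c z h) (v⁻¹ * (b * a))
    rw [hact (w, χ) c z h hχz', h1, gauge_symm_smul, h3,
      hact (w', χ') c z h hχ'z, ξ.smul_mul]
end

section
/- Let Γ and G be topological groups with G SIN. On the set R(Γ,G) of continuous homomorphisms Γ → G, consider the uniform structure U_R whose basic entourages are O(K,V) := {(h,h̃) : h̃(c)·h(c)⁻¹ ∈ V for all c ∈ K}, for K ⊆ Γ compact and V a symmetric open neighborhood of e in G. Then the conjugation action R(Γ,G) × G → R(Γ,G), (φ,g) ↦ g⁻¹φg, is uniformly continuous (G carrying the uniformity with basic entourages {(g̃,g) : g̃g⁻¹ ∈ V}). -/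
open Set Topology Filter

variable {X C E G : Type*} [TopologicalSpace X] [TopologicalSpace C] [TopologicalSpace E]
  [TopologicalSpace G] [Group G]

/-- The set of continuous homomorphisms `Γ → G`. -/
def CtsHom (Γ G : Type*) [TopologicalSpace Γ] [Group Γ] [TopologicalSpace G] [Group G] :=
  {f : Γ → G // Continuous f ∧ ∀ a b, f (a * b) = f a * f b}

/-- The basic entourage `O(K,V)` on the set of continuous homomorphisms:
pairs `(h, h̃)` with `h̃(c)·h(c)⁻¹ ∈ V` for all `c ∈ K`. -/
def homEnt {Γ G : Type*} [TopologicalSpace Γ] [Group Γ] [TopologicalSpace G] [Group G]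
    (K : Set Γ) (V : Set G) : Set (CtsHom Γ G × CtsHom Γ G) :=
  {p | ∀ c ∈ K, p.2.1 c * (p.1.1 c)⁻¹ ∈ V}

/-- Conjugation `φ ↦ g⁻¹ φ g` of a continuous homomorphism. -/
def conjHom {Γ G : Type*} [TopologicalSpace Γ] [Group Γ] [TopologicalSpace G] [Group G]
    [IsTopologicalGroup G] (φ : CtsHom Γ G) (g : G) : CtsHom Γ G :=
  ⟨fun x => g⁻¹ * φ.1 x * g,
    (continuous_const.mul φ.2.1).mul continuous_const,
    fun a b => by dsimp only; rw [φ.2.2]; group⟩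


/-- Key neighbourhood lemma: from a SIN group and `V ∈ 𝓝 1` produce a symmetric open
neighbourhood `W` such that conjugates of triple products from `W` land in `V`. -/
lemma exists_symm_triple {G : Type*} [TopologicalSpace G] [Group G] [IsTopologicalGroup G]
    (hSIN : IsSIN G) {V : Set G} (hV : V ∈ 𝓝 (1 : G)) :
    ∃ W : Set G, SymmNhd W ∧
      ∀ x ∈ W, ∀ y ∈ W, ∀ z ∈ W, ∀ s t : G, s * (x * (t * y * t⁻¹) * z) * s⁻¹ ∈ V := by
  obtain ⟨V₁, hV₁n, hV₁V, hV₁c⟩ := hSIN V hV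
  obtain ⟨W₁, _, hW₁1, hW₁⟩ := exists_open_nhds_one_mul_subset hV₁n
  have hW₁n : W₁ ∈ 𝓝 (1 : G) := ‹IsOpen W₁›.mem_nhds hW₁1
  obtain ⟨W₂, _, hW₂1, hW₂⟩ := exists_open_nhds_one_mul_subset hW₁n
  have hW₂n : W₂ ∈ 𝓝 (1 : G) := ‹IsOpen W₂›.mem_nhds hW₂1
  obtain ⟨W₃, hW₃n, hW₃W₂, hW₃c⟩ := hSIN W₂ hW₂n
  set O : Set G := interior W₃ with hO
  have hOopen : IsOpen O := isOpen_interior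
  have hO1 : (1 : G) ∈ O := mem_interior_iff_mem_nhds.2 hW₃n
  refine ⟨O ∩ O⁻¹, ⟨hOopen.inter (hOopen.preimage continuous_inv), ⟨hO1, by simpa using hO1⟩,
    fun v hv => ⟨by simpa using hv.2, by simpa using hv.1⟩⟩, ?_⟩
  rintro x ⟨hx, -⟩ y ⟨hy, -⟩ z ⟨hz, -⟩ s t
  have hxW : x ∈ W₃ := interior_subset hx
  have hyW : y ∈ W₃ := interior_subset hy
  have hzW : z ∈ W₃ := interior_subset hz
  have hm : t * y * t⁻¹ ∈ W₂ := hW₃W₂ (hW₃c y hyW t)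
  have hxm : x * (t * y * t⁻¹) ∈ W₁ := hW₂ (Set.mul_mem_mul (hW₃W₂ hxW) hm)
  have hzW₁ : z ∈ W₁ := by
    have := hW₂ (Set.mul_mem_mul (hW₃W₂ hzW) hW₂1)
    simpa using this
  have hxyz : x * (t * y * t⁻¹) * z ∈ V₁ := hW₁ (Set.mul_mem_mul hxm hzW₁)
  exact hV₁V (hV₁c _ hxyz s)

/-- **Proposition (unihom)**. If `G` is SIN, the conjugation action of `G` on the space
`R(Γ,G)` of continuous homomorphisms, with the uniform structure `U_R` with basic entourages
`O(K,V)`, is uniformly continuous (`G` carrying its canonical uniformity). -/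
theorem statement7 {Γ G : Type*} [TopologicalSpace Γ] [Group Γ] [IsTopologicalGroup Γ]
    [TopologicalSpace G] [Group G] [IsTopologicalGroup G] (hSIN : IsSIN G) :
    ∀ 𝔘 : UniformSpace (CtsHom Γ G),
      (@uniformity _ 𝔘).HasBasis
        (fun s : Set Γ × Set G => IsCompact s.1 ∧ SymmNhd s.2)
        (fun s => homEnt s.1 s.2) →
      ∀ 𝔙 : UniformSpace G,
        (@uniformity _ 𝔙).HasBasis (fun V : Set G => SymmNhd V) (fun V => grpEnt G V) →
        @UniformContinuous _ _ (@instUniformSpaceProd _ _ 𝔘 𝔙) 𝔘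
          (fun p : CtsHom Γ G × G => conjHom p.1 p.2) := by
  intro 𝔘 hU 𝔙 hV
  rw [UniformContinuous]
  have hprod : (@uniformity _ (@instUniformSpaceProd _ _ 𝔘 𝔙)).HasBasis
      (fun s : (Set Γ × Set G) × Set G => (IsCompact s.1.1 ∧ SymmNhd s.1.2) ∧ SymmNhd s.2)
      (fun s => (fun p : (CtsHom Γ G × G) × (CtsHom Γ G × G) =>
        ((p.1.1, p.2.1), (p.1.2, p.2.2))) ⁻¹' (homEnt s.1.1 s.1.2 ×ˢ grpEnt G s.2)) := by
    rw [uniformity_prod_eq_comap_prod]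
    exact (hU.prod hV).comap _
  rw [hprod.tendsto_iff hU]
  rintro ⟨K, V⟩ ⟨hK, hVo, hV1, hVs⟩
  obtain ⟨W, hWsymm, hW⟩ := exists_symm_triple hSIN (hVo.mem_nhds hV1)
  refine ⟨((K, W), W), ⟨⟨hK, hWsymm⟩, hWsymm⟩, ?_⟩
  rintro ⟨⟨φ, g⟩, ψ, h⟩ ⟨hhom, hgrp⟩ c hc
  have ha : ψ.1 c * (φ.1 c)⁻¹ ∈ W := hhom c hc
  have hb : g * h⁻¹ ∈ W := hgrp
  have hb' : (g * h⁻¹)⁻¹ ∈ W := hWsymm.2.2 _ hb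
  have key := hW _ ha _ hb' _ hb h⁻¹ (φ.1 c)
  show h⁻¹ * ψ.1 c * h * (g⁻¹ * φ.1 c * g)⁻¹ ∈ V
  convert key using 1
  group
end

section
/- Let ξ = (p : E → X) be a numerable principal G-bundle with G SIN and X Hausdorff. Then the topology on the gauge group 𝒢 induced by the uniform structure U_𝒢 coincides with the compact-open topology (𝒢 regarded as a subspace of the space of continuous self-maps of E with the compact-open topology). -/
open Set Topology Filter

variable {X C E G : Type*} [TopologicalSpace X] [TopologicalSpace C] [TopologicalSpace E]
  [TopologicalSpace G] [Group G]

open scoped Pointwise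

section GaugeAux
set_option linter.unusedSectionVars false

variable {X E G : Type*} [TopologicalSpace X] [TopologicalSpace E]
  [TopologicalSpace G] [Group G] [IsTopologicalGroup G]

/-- Bundled trivialization data. -/
structure TrivData (ξ : PrincipalGSpace X E G) where
  U : Set X
  isOpen : IsOpen U
  φ : {z : E // ξ.proj z ∈ U} ≃ₜ ↥U × G
  h1 : ∀ z, ((φ z).1 : X) = ξ.proj z.1
  h2 : ∀ z (g : G) (hz : ξ.proj (ξ.smul z.1 g) ∈ U),
    φ ⟨ξ.smul z.1 g, hz⟩ = ((φ z).1, (φ z).2 * g)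

variable {ξ : PrincipalGSpace X E G}

lemma smul_cancel (z : E) {a b : G} (h : ξ.smul z a = ξ.smul z b) : a = b := by
  have h2 : ξ.smul z (a * a⁻¹) = ξ.smul z (b * a⁻¹) := by
    rw [← ξ.smul_mul, ← ξ.smul_mul, h]
  rw [mul_inv_cancel, ξ.smul_one] at h2
  have := ξ.free z (b * a⁻¹) h2.symm
  exact (mul_inv_eq_one.mp this).symm

lemma TrivData.proj_symm (T : TrivData ξ) (q : ↥T.U × G) :
    ξ.proj (T.φ.symm q).1 = q.1 := by
  have := T.h1 (T.φ.symm q)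
  rw [T.φ.apply_symm_apply] at this
  exact this.symm

lemma TrivData.symm_smul (T : TrivData ξ) (u : ↥T.U) (g h : G) :
    (T.φ.symm (u, g * h)).1 = ξ.smul (T.φ.symm (u, g)).1 h := by
  set z := T.φ.symm (u, g) with hz
  have hmem : ξ.proj (ξ.smul z.1 h) ∈ T.U := by
    rw [ξ.proj_smul]; exact z.2
  have h2 : T.φ ⟨ξ.smul z.1 h, hmem⟩ = (u, g * h) := by
    rw [T.h2 z h hmem, hz, T.φ.apply_symm_apply]
  have h3 := congrArg (fun q => (T.φ.symm q).1) h2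
  simpa using h3.symm

/-- The canonical local section. -/
def TrivData.sec (T : TrivData ξ) (u : ↥T.U) : E := (T.φ.symm (u, 1)).1

lemma TrivData.proj_sec (T : TrivData ξ) (u : ↥T.U) : ξ.proj (T.sec u) = u :=
  T.proj_symm (u, 1)

lemma TrivData.continuous_sec (T : TrivData ξ) : Continuous T.sec := by
  have h1 : Continuous fun u : ↥T.U => ((u, 1) : ↥T.U × G) :=
    continuous_id.prodMk continuous_const
  exact continuous_subtype_val.comp (T.φ.symm.continuous.comp h1)

lemma TrivData.symm_eq (T : TrivData ξ) (u : ↥T.U) (h : G) :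
    (T.φ.symm (u, h)).1 = ξ.smul (T.sec u) h := by
  have := T.symm_smul u 1 h
  rwa [one_mul] at this

lemma TrivData.mem_gauge (T : TrivData ξ) (ψ : GaugeGp ξ) (u : ↥T.U) :
    ξ.proj (ψ.1 (T.sec u)) ∈ T.U := by
  rw [ψ.2.1, T.proj_sec]; exact u.2

/-- The "transition function" of a gauge transformation in a trivialization. -/
def TrivData.gmap (T : TrivData ξ) (ψ : GaugeGp ξ) (u : ↥T.U) : G :=
  (T.φ ⟨ψ.1 (T.sec u), T.mem_gauge ψ u⟩).2

lemma TrivData.phi_gauge (T : TrivData ξ) (ψ : GaugeGp ξ) (u : ↥T.U) :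
    T.φ ⟨ψ.1 (T.sec u), T.mem_gauge ψ u⟩ = (u, T.gmap ψ u) := by
  refine Prod.ext ?_ rfl
  apply Subtype.ext
  rw [T.h1]
  show ξ.proj (ψ.1 (T.sec u)) = (u : X)
  rw [ψ.2.1, T.proj_sec]

lemma TrivData.gauge_sec (T : TrivData ξ) (ψ : GaugeGp ξ) (u : ↥T.U) :
    ψ.1 (T.sec u) = ξ.smul (T.sec u) (T.gmap ψ u) := by
  have h := congrArg (fun q => (T.φ.symm q).1) (T.phi_gauge ψ u)
  simp only [Homeomorph.symm_apply_apply] at h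
  rw [← T.symm_eq]
  exact h

lemma TrivData.continuous_gmap (T : TrivData ξ) (ψ : GaugeGp ξ) :
    Continuous (T.gmap ψ) := by
  have h1 : Continuous fun u : ↥T.U => ψ.1 (T.sec u) :=
    ψ.1.continuous.comp T.continuous_sec
  have h2 : Continuous fun u : ↥T.U =>
      (⟨ψ.1 (T.sec u), T.mem_gauge ψ u⟩ : {z : E // ξ.proj z ∈ T.U}) :=
    h1.subtype_mk _
  exact (T.φ.continuous.comp h2).snd

lemma exists_trivData (hbdl : ξ.IsBundle) (x : X) : ∃ T : TrivData ξ, x ∈ T.U := by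
  obtain ⟨U, hUo, hxU, φ, hφ1, hφ2⟩ := hbdl x
  exact ⟨⟨U, hUo, φ, hφ1, hφ2⟩, hxU⟩

end GaugeAux

/-- **Proposition (compou), gauge-group case**. For a numerable principal `G`-bundle with
`G` SIN and `X` Hausdorff, the topology induced on the gauge group `𝒢` by the uniform
structure `U_𝒢` coincides with the compact-open topology. -/
theorem statement9 {X E G : Type*} [TopologicalSpace X] [TopologicalSpace E]
    [TopologicalSpace G] [Group G] [IsTopologicalGroup G] [T2Space X]
    (ξ : PrincipalGSpace X E G) (hbdl : ξ.IsBundle) (hnum : ξ.Numerable)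
    (hSIN : IsSIN G) :
    ∀ 𝔘 : UniformSpace (GaugeGp ξ),
      (@uniformity _ 𝔘).HasBasis
        (fun s : Set X × Set G => IsCompact s.1 ∧ SymmNhd s.2)
        (fun s => gaugeEnt ξ s.1 s.2) →
      𝔘.toTopologicalSpace = gaugeCO ξ := by
  classical
  intro 𝔘 hB
  set emb : GaugeGp ξ → C(E, E) := fun ψ => ⟨ψ.1, ψ.1.continuous⟩ with hemb
  refine TopologicalSpace.ext_nhds fun χ => ?_
  have hCOnhds : @nhds _ (gaugeCO ξ) χ = Filter.comap emb (𝓝 (emb χ)) :=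
    nhds_induced emb χ
  have hUnhds : @nhds _ 𝔘.toTopologicalSpace χ
      = Filter.comap (Prod.mk χ) (@uniformity _ 𝔘) :=
    @nhds_eq_comap_uniformity _ 𝔘 χ
  have hBχ := hB.comap (Prod.mk χ)
  refine le_antisymm ?_ ?_
  · -- every compact-open neighbourhood is a uniform neighbourhood
    rw [hCOnhds, ← Filter.tendsto_iff_comap]
    rw [ContinuousMap.tendsto_nhds_compactOpen]
    intro L hL S hS hmaps
    -- for each z ∈ L choose product neighbourhoods
    have hF : Continuous fun q : E × G => ξ.smul (χ.1 q.1) q.2⁻¹ := by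
      have hg : Continuous fun q : E × G => ((χ.1 q.1, q.2⁻¹) : E × G) :=
        (χ.1.continuous.comp continuous_fst).prodMk continuous_snd.inv
      exact ξ.continuous_smul.comp hg
    have hzWV : ∀ z : ↥L, ∃ W : Set E, ∃ Vz : Set G, IsOpen W ∧ IsOpen Vz ∧
        z.1 ∈ W ∧ (1 : G) ∈ Vz ∧ ∀ w ∈ W, ∀ v ∈ Vz, ξ.smul (χ.1 w) v⁻¹ ∈ S := by
      intro z
      have hmem : ((z.1, (1 : G)) : E × G) ∈
          (fun q : E × G => ξ.smul (χ.1 q.1) q.2⁻¹) ⁻¹' S := by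
        show ξ.smul (χ.1 z.1) 1⁻¹ ∈ S
        rw [inv_one, ξ.smul_one]
        exact hmaps z.2
      obtain ⟨W, Vz, hWo, hVo, hzW, h1V, hsub⟩ :=
        isOpen_prod_iff.mp (hS.preimage hF) z.1 1 hmem
      exact ⟨W, Vz, hWo, hVo, hzW, h1V, fun w hw v hv => hsub (Set.mk_mem_prod hw hv)⟩
    choose W Vz hWo hVo hzW h1V hkey using hzWV
    have hcover : L ⊆ ⋃ z : ↥L, W z := fun y hy =>
      Set.mem_iUnion.mpr ⟨⟨y, hy⟩, hzW ⟨y, hy⟩⟩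
    obtain ⟨t, ht⟩ := hL.elim_finite_subcover W hWo hcover
    set V' : Set G := ⋂ z ∈ t, Vz z with hV'def
    have hV'o : IsOpen V' := isOpen_biInter_finset fun z _ => hVo z
    have h1V' : (1 : G) ∈ V' := Set.mem_iInter₂.mpr fun z _ => h1V z
    set V : Set G := V' ∩ V'⁻¹ with hVdef
    have hVsymm : SymmNhd V := by
      refine ⟨hV'o.inter hV'o.inv, ⟨h1V', by simpa using h1V'⟩, ?_⟩
      rintro v ⟨hv1, hv2⟩
      exact ⟨hv2, by simpa using hv1⟩
    rw [hUnhds]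
    apply (hBχ.eventually_iff).mpr
    refine ⟨(ξ.proj '' L, V), ⟨hL.image ξ.continuous_proj, hVsymm⟩, ?_⟩
    intro ψ hψ
    intro z hz
    have hzK : ξ.proj z ∈ ξ.proj '' L := Set.mem_image_of_mem _ hz
    obtain ⟨v, hvV, hveq⟩ := hψ z hzK
    have hveq' : (χ.1 : E → E) z = ξ.smul ((ψ.1 : E → E) z) v := hveq
    have hψz : (ψ.1 : E → E) z = ξ.smul ((χ.1 : E → E) z) v⁻¹ := by
      rw [hveq', ξ.smul_mul, mul_inv_cancel, ξ.smul_one]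
    obtain ⟨z₀, hz₀t, hzW₀⟩ := Set.mem_iUnion₂.mp (ht hz)
    have hvV' : v ∈ Vz z₀ := by
      have hv1 : v ∈ V' := hvV.1
      exact Set.mem_iInter₂.mp hv1 z₀ hz₀t
    have hgoal : (ψ.1 : E → E) z ∈ S := by
      rw [hψz]
      exact hkey z₀ z hzW₀ v hvV'
    exact hgoal
  · -- every uniform neighbourhood is a compact-open neighbourhood
    rw [hUnhds, hCOnhds]
    apply hBχ.ge_iff.mpr
    rintro ⟨K, V⟩ ⟨hK, hVo, hV1, hVinv⟩
    -- Step 1: conjugation-invariant V₀ ⊆ V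
    obtain ⟨V₁, hV₁mem, hV₁V, hV₁conj⟩ := hSIN V (hVo.mem_nhds hV1)
    set V₀ : Set G := interior V₁ ∩ (interior V₁)⁻¹ with hV₀def
    have hIntConj : ∀ g ∈ interior V₁, ∀ h : G, h * g * h⁻¹ ∈ interior V₁ := by
      intro g hg h
      have hc : Continuous fun x : G => h⁻¹ * x * h := by continuity
      have hOo : IsOpen ((fun x : G => h⁻¹ * x * h) ⁻¹' interior V₁) :=
        isOpen_interior.preimage hc
      have hOsub : (fun x : G => h⁻¹ * x * h) ⁻¹' interior V₁ ⊆ V₁ := by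
        intro x hx
        have := hV₁conj _ (interior_subset hx) h
        simpa [mul_assoc] using this
      have hmem : h * g * h⁻¹ ∈ (fun x : G => h⁻¹ * x * h) ⁻¹' interior V₁ := by
        show h⁻¹ * (h * g * h⁻¹) * h ∈ interior V₁
        have : h⁻¹ * (h * g * h⁻¹) * h = g := by group
        rwa [this]
      exact interior_maximal hOsub hOo hmem
    have hV₀o : IsOpen V₀ := isOpen_interior.inter isOpen_interior.inv
    have h1int : (1 : G) ∈ interior V₁ := mem_interior_iff_mem_nhds.mpr hV₁mem
    have hV₀1 : (1 : G) ∈ V₀ := ⟨h1int, by simpa using h1int⟩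
    have hV₀conj : ∀ v ∈ V₀, ∀ h : G, h * v * h⁻¹ ∈ V₀ := by
      rintro v ⟨hv1, hv2⟩ h
      refine ⟨hIntConj v hv1 h, ?_⟩
      have hv2' : v⁻¹ ∈ interior V₁ := Set.mem_inv.mp hv2
      have := hIntConj v⁻¹ hv2' h
      rw [Set.mem_inv]
      have heq : (h * v * h⁻¹)⁻¹ = h * v⁻¹ * h⁻¹ := by group
      rwa [heq]
    have hV₀V : V₀ ⊆ V := fun v hv => hV₁V (interior_subset hv.1)
    -- Step 2: V₂ with V₂⁻¹ * V₂⁻¹ * V₂ ⊆ V₀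
    obtain ⟨W₁, hW₁o, hW₁1, hW₁m⟩ := exists_open_nhds_one_mul_subset (hV₀o.mem_nhds hV₀1)
    obtain ⟨W₂, hW₂o, hW₂1, hW₂m⟩ := exists_open_nhds_one_mul_subset (hW₁o.mem_nhds hW₁1)
    have hW₂W₁ : W₂ ⊆ W₁ := fun a ha => by
      have := hW₂m (Set.mul_mem_mul ha hW₂1)
      simpa using this
    set V₂ : Set G := W₂ ∩ W₂⁻¹ with hV₂def
    have hV₂o : IsOpen V₂ := hW₂o.inter hW₂o.inv
    have hV₂1 : (1 : G) ∈ V₂ := ⟨hW₂1, by simpa using hW₂1⟩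
    have htriple : ∀ a ∈ V₂, ∀ b ∈ V₂, ∀ c ∈ V₂, c⁻¹ * b⁻¹ * a ∈ V₀ := by
      intro a ha b hb c hc
      have hc' : c⁻¹ ∈ W₂ := Set.mem_inv.mp hc.2
      have hb' : b⁻¹ ∈ W₂ := Set.mem_inv.mp hb.2
      have h1 : b⁻¹ * a ∈ W₁ := hW₂m (Set.mul_mem_mul hb' ha.1)
      have h2 : c⁻¹ * (b⁻¹ * a) ∈ V₀ := hW₁m (Set.mul_mem_mul (hW₂W₁ hc') h1)
      simpa [mul_assoc] using h2
    -- Step 3: trivializations and the covering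
    choose T hT using exists_trivData hbdl
    set O : X → Set X := fun x => Subtype.val ''
      ((fun u : ↥(T x).U => ((T x).gmap χ ⟨x, hT x⟩)⁻¹ * (T x).gmap χ u) ⁻¹' V₂) with hOdef
    have hOopen : ∀ x, IsOpen (O x) := by
      intro x
      apply (T x).isOpen.isOpenMap_subtype_val
      exact hV₂o.preimage (continuous_const.mul ((T x).continuous_gmap χ))
    have hxO : ∀ x, x ∈ O x := by
      intro x
      refine ⟨⟨x, hT x⟩, ?_, rfl⟩
      show ((T x).gmap χ ⟨x, hT x⟩)⁻¹ * (T x).gmap χ ⟨x, hT x⟩ ∈ V₂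
      rw [inv_mul_cancel]
      exact hV₂1
    have hOU : ∀ x, O x ⊆ (T x).U := by
      rintro x y ⟨u, _, rfl⟩
      exact u.2
    obtain ⟨t, ht⟩ := hK.elim_finite_subcover O hOopen
      (fun y hy => Set.mem_iUnion.mpr ⟨y, hxO y⟩)
    obtain ⟨C, hCcpt, hCO, hKC⟩ := hK.finite_compact_cover t O (fun i _ => hOopen i) ht
    have hCU : ∀ i, C i ⊆ (T i).U := fun i => (hCO i).trans (hOU i)
    set L : X → Set E := fun i =>
      Set.range (fun x : ↥(C i) => (T i).sec ⟨x.1, hCU i x.2⟩) with hLdef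
    set S : X → Set E := fun i => Subtype.val '' ((T i).φ ⁻¹'
      (Set.univ ×ˢ {h : G | ((T i).gmap χ ⟨i, hT i⟩)⁻¹ * h ∈ V₂ * V₂})) with hSdef
    have hLcpt : ∀ i, IsCompact (L i) := by
      intro i
      haveI : CompactSpace ↥(C i) := isCompact_iff_compactSpace.mp (hCcpt i)
      apply isCompact_range
      exact (T i).continuous_sec.comp (continuous_subtype_val.subtype_mk _)
    have hSopen : ∀ i, IsOpen (S i) := by
      intro i
      have hvalopen : IsOpenMap (Subtype.val : {z : E // ξ.proj z ∈ (T i).U} → E) :=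
        ((T i).isOpen.preimage ξ.continuous_proj).isOpenMap_subtype_val
      apply hvalopen
      apply (T i).φ.continuous.isOpen_preimage
      apply isOpen_univ.prod
      exact (hV₂o.mul_left).preimage (continuous_const.mul continuous_id)
    -- the key fact about points of C i
    have hgmapC : ∀ i, ∀ x : X, (hx : x ∈ C i) →
        ((T i).gmap χ ⟨i, hT i⟩)⁻¹ * (T i).gmap χ ⟨x, hCU i hx⟩ ∈ V₂ := by
      intro i x hx
      obtain ⟨u, hu, huval⟩ := hCO i hx
      have : u = ⟨x, hCU i hx⟩ := Subtype.ext huval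
      rwa [this] at hu
    -- χ maps L i into S i
    have hχLS : ∀ i, Set.MapsTo χ.1 (L i) (S i) := by
      rintro i z ⟨x, rfl⟩
      set u : ↥(T i).U := ⟨x.1, hCU i x.2⟩ with hudef
      refine ⟨⟨χ.1 ((T i).sec u), (T i).mem_gauge χ u⟩, ?_, rfl⟩
      rw [Set.mem_preimage, (T i).phi_gauge χ u]
      refine Set.mk_mem_prod (Set.mem_univ _) ?_
      show ((T i).gmap χ ⟨i, hT i⟩)⁻¹ * (T i).gmap χ u ∈ V₂ * V₂
      have := hgmapC i x.1 x.2
      have h1 : ((T i).gmap χ ⟨i, hT i⟩)⁻¹ * (T i).gmap χ u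
          = (((T i).gmap χ ⟨i, hT i⟩)⁻¹ * (T i).gmap χ u) * 1 := by rw [mul_one]
      rw [h1]
      exact Set.mul_mem_mul this hV₂1
    -- assemble the compact-open neighbourhood
    refine Filter.mem_comap.mpr
      ⟨⋂ i ∈ (t : Set X), {f : C(E, E) | Set.MapsTo f (L i) (S i)}, ?_, ?_⟩
    · apply (Filter.biInter_mem t.finite_toSet).mpr
      intro i _
      exact ((ContinuousMap.isOpen_setOf_mapsTo (hLcpt i) (hSopen i)).mem_nhds (hχLS i))
    · intro ψ hψ
      simp only [Set.mem_preimage, Set.mem_iInter] at hψ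
      intro z' hz'
      rw [hKC] at hz'
      obtain ⟨i, hit, hxC⟩ := Set.mem_iUnion₂.mp hz'
      set x : X := ξ.proj z' with hxdef
      set u : ↥(T i).U := ⟨x, hCU i hxC⟩ with hudef
      set z : E := (T i).sec u with hzdef
      have hzL : z ∈ L i := ⟨⟨x, hxC⟩, rfl⟩
      have hψzS : ψ.1.1 z ∈ S i := hψ i hit hzL
      -- decompose ψ z in the trivialization
      obtain ⟨w, hw, hwval⟩ := hψzS
      have hweq : w = ⟨ψ.1.1 z, (T i).mem_gauge ψ u⟩ := Subtype.ext hwval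
      rw [hweq] at hw
      have hw2 : (T i).φ ⟨ψ.1 ((T i).sec u), (T i).mem_gauge ψ u⟩ ∈
          Set.univ ×ˢ {h : G | ((T i).gmap χ ⟨i, hT i⟩)⁻¹ * h ∈ V₂ * V₂} := hw
      rw [(T i).phi_gauge ψ u] at hw2
      have hd : ((T i).gmap χ ⟨i, hT i⟩)⁻¹ * (T i).gmap ψ u ∈ V₂ * V₂ := hw2.2
      have ha : ((T i).gmap χ ⟨i, hT i⟩)⁻¹ * (T i).gmap χ u ∈ V₂ := hgmapC i x hxC
      obtain ⟨b, hb, c, hc, hbc⟩ := hd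
      -- the division element
      set g₀ : G := (T i).gmap χ ⟨i, hT i⟩ with hg₀def
      set v : G := ((T i).gmap ψ u)⁻¹ * (T i).gmap χ u with hvdef
      have hgψ : (T i).gmap ψ u = g₀ * (b * c) := by
        have := congrArg (fun y => g₀ * y) hbc
        simpa [mul_inv_cancel_left] using this.symm
      have hgχ : (T i).gmap χ u = g₀ * (g₀⁻¹ * (T i).gmap χ u) := by
        rw [mul_inv_cancel_left]
      have hveq : v = c⁻¹ * b⁻¹ * (g₀⁻¹ * (T i).gmap χ u) := by
        rw [hvdef, hgψ]
        conv_lhs => rw [hgχ]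
        group
      have hvV₀ : v ∈ V₀ := by
        rw [hveq]
        exact htriple _ ha b hb c hc
      -- relate χ z and ψ z
      have hχz : (χ.1 : E → E) z = ξ.smul z ((T i).gmap χ u) := (T i).gauge_sec χ u
      have hψz : (ψ.1 : E → E) z = ξ.smul z ((T i).gmap ψ u) := (T i).gauge_sec ψ u
      have hstep : (χ.1 : E → E) z = ξ.smul ((ψ.1 : E → E) z) v := by
        rw [hχz, hψz, ξ.smul_mul, hvdef, mul_inv_cancel_left]
      -- pass from z to z'
      have hprojz : ξ.proj z' = ξ.proj z := by
        rw [hzdef, (T i).proj_sec]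
      obtain ⟨g, hg⟩ := ξ.exists_smul_eq z' z hprojz
      refine ⟨g⁻¹ * v * g, ?_, ?_⟩
      · apply hV₀V
        have := hV₀conj v hvV₀ g⁻¹
        rwa [inv_inv] at this
      · rw [← hg, χ.2.2, ψ.2.2, hstep, ξ.smul_mul, ξ.smul_mul]
        congr 1
        group
end
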